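/- arXiv:2301.05703 — 6 statements merged into one kernel-verified Lean document; each statement's English description precedes it below -/
import Mathlib

section
/- Under unconfoundedness, SUTVA and population overlap, the conditional expectation given X of e(X)(1−e(X))τ(X) − (W−e(X))Y is zero almost surely; that is, E[e(X)(1−e(X))τ(X) − (W−e(X))Y | σ(X)] = 0 a.s. -/
/-!
Write `p = E[W | X]` and `μ_w = E[Y_w | X]`. Since `W² = W`, SUTVA gives `(W - p) Y = W Y₁ - p Y`.
Given `X`, the conditional-expectation kernel is almost surely a product measure for `W` and
`Y_w` (unconfoundedness), so `E[W Y_w | X] = p μ_w`; hence `E[Y | X] = p μ₁ + (1 - p) μ₀` and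
`E[(W - p) Y | X] = p μ₁ - p E[Y | X] = p (1 - p) (μ₁ - μ₀)`. As `e(X)` and `μ_w(X)` are versions of
`p` and `μ_w`, the integrand is a.e. `E[Z | X] - Z` with `Z = (W - p) Y`, whose conditional
expectation vanishes.
-/

open MeasureTheory ProbabilityTheory Filter Set

abbrev sigmaAlg {Ω 𝒳 : Type*} [m𝒳 : MeasurableSpace 𝒳] (X : Ω → 𝒳) : MeasurableSpace Ω :=
  MeasurableSpace.comap X m𝒳

theorem ProbabilityTheory.CondIndepFun.condExp_mul_ae_eq {Ω : Type*} {m mΩ : MeasurableSpace Ω}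
    [StandardBorelSpace Ω] {hm : m ≤ mΩ} {μ : Measure Ω} [IsFiniteMeasure μ] {f g : Ω → ℝ}
    (hfg : CondIndepFun m hm f g μ) (hf : Measurable f) (hg : Measurable g)
    (hfi : Integrable f μ) (hgi : Integrable g μ) (hfgi : Integrable (f * g) μ) :
    μ[f * g|m] =ᵐ[μ] μ[f|m] * μ[g|m] := by
  have hker : ∀ᵐ ω ∂μ, IndepFun f g (condExpKernel μ m ω) := by
    refine ae_of_ae_trim hm ?_
    filter_upwards [(condIndepFun_iff_map_prod_eq_prod_map_map hf hg).1 hfg] with ω hω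
    rw [indepFun_iff_map_prod_eq_prod_map_map hf.aemeasurable hg.aemeasurable]
    simpa only [Kernel.map_apply _ hf, Kernel.map_apply _ hg, Kernel.map_apply _ (hf.prodMk hg),
      Kernel.prod_apply] using hω
  filter_upwards [condExp_ae_eq_integral_condExpKernel hm hfgi,
    condExp_ae_eq_integral_condExpKernel hm hfi, condExp_ae_eq_integral_condExpKernel hm hgi,
    hker] with ω hfg hf' hg' hindep
  rw [hfg, Pi.mul_apply, hf', hg']
  exact hindep.integral_fun_mul_eq_mul_integral hf.aestronglyMeasurable hg.aestronglyMeasurable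

lemma condExp_condExp_sub_ae_eq_zero {Ω : Type*} {m mΩ : MeasurableSpace Ω} {μ : Measure Ω}
    [IsFiniteMeasure μ] (hm : m ≤ mΩ) {f : Ω → ℝ} (hf : Integrable f μ) :
    μ[μ[f|m] - f|m] =ᵐ[μ] 0 := by
  filter_upwards [condExp_sub integrable_condExp hf m] with ω h
  rw [h, condExp_of_stronglyMeasurable hm stronglyMeasurable_condExp integrable_condExp,
    Pi.sub_apply, sub_self, Pi.zero_apply]

section BinaryTreatment

variable {Ω : Type*} {m mΩ : MeasurableSpace Ω} {μ : Measure Ω} {W Y0 Y1 Y : Ω → ℝ}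

lemma abs_le_one_of_binary (hW : ∀ ω, W ω = 0 ∨ W ω = 1) (ω : Ω) : |W ω| ≤ 1 := by
  rcases hW ω with h | h <;> simp [h]

lemma ae_abs_condExp_le_one_of_binary (hW : ∀ ω, W ω = 0 ∨ W ω = 1) :
    ∀ᵐ ω ∂μ, |μ[W|m] ω| ≤ 1 :=
  ae_bdd_abs_condExp_of_ae_bdd_abs (Eventually.of_forall (abs_le_one_of_binary hW))

lemma integrable_mul_of_binary (hWm : Measurable W) (hW : ∀ ω, W ω = 0 ∨ W ω = 1)
    {Z : Ω → ℝ} (hZ : Integrable Z μ) : Integrable (W * Z) μ :=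
  hZ.bdd_mul hWm.aestronglyMeasurable (Eventually.of_forall (abs_le_one_of_binary hW))

lemma integrable_sub_condExp_mul_of_binary [IsFiniteMeasure μ] (hm : m ≤ mΩ)
    (hWm : Measurable W) (hW : ∀ ω, W ω = 0 ∨ W ω = 1) (hY : Integrable Y μ) :
    Integrable (fun ω => (W ω - μ[W|m] ω) * Y ω) μ := by
  refine hY.bdd_mul (c := 2)
    (hWm.aestronglyMeasurable.sub (stronglyMeasurable_condExp.mono hm).aestronglyMeasurable) ?_
  filter_upwards [ae_abs_condExp_le_one_of_binary hW] with ω hω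
  calc ‖W ω - μ[W|m] ω‖ ≤ |W ω| + |μ[W|m] ω| := abs_sub _ _
    _ ≤ 1 + 1 := add_le_add (abs_le_one_of_binary hW ω) hω
    _ = 2 := one_add_one_eq_two

lemma condExp_binary_mul_ae_eq [StandardBorelSpace Ω] [IsFiniteMeasure μ] {hm : m ≤ mΩ}
    (hWm : Measurable W) (hW : ∀ ω, W ω = 0 ∨ W ω = 1) {Z : Ω → ℝ} (hZm : Measurable Z)
    (hZ : Integrable Z μ) (hWZ : CondIndepFun m hm W Z μ) :
    μ[W * Z|m] =ᵐ[μ] μ[W|m] * μ[Z|m] :=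
  hWZ.condExp_mul_ae_eq hWm hZm ((integrable_const 1).mono' hWm.aestronglyMeasurable
    (Eventually.of_forall (abs_le_one_of_binary hW))) hZ (integrable_mul_of_binary hWm hW hZ)

lemma observed_outcome_eq (hSUTVA : ∀ ω, Y ω = W ω * Y1 ω + (1 - W ω) * Y0 ω) :
    Y = W * Y1 + (Y0 - W * Y0) := by
  ext ω
  simp only [hSUTVA, Pi.add_apply, Pi.sub_apply, Pi.mul_apply]
  ring

lemma integrable_observed_outcome (hWm : Measurable W) (hW : ∀ ω, W ω = 0 ∨ W ω = 1)
    (hY0 : Integrable Y0 μ) (hY1 : Integrable Y1 μ)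
    (hSUTVA : ∀ ω, Y ω = W ω * Y1 ω + (1 - W ω) * Y0 ω) : Integrable Y μ :=
  observed_outcome_eq hSUTVA ▸ (integrable_mul_of_binary hWm hW hY1).add
    (hY0.sub (integrable_mul_of_binary hWm hW hY0))

theorem condExp_treatmentResidual_mul_outcome_ae_eq [StandardBorelSpace Ω] [IsFiniteMeasure μ]
    (hm : m ≤ mΩ) (hWm : Measurable W) (hW : ∀ ω, W ω = 0 ∨ W ω = 1)
    (hY0m : Measurable Y0) (hY1m : Measurable Y1) (hY0 : Integrable Y0 μ) (hY1 : Integrable Y1 μ)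
    (hSUTVA : ∀ ω, Y ω = W ω * Y1 ω + (1 - W ω) * Y0 ω)
    (hUnconf : CondIndepFun m hm W (fun ω => (Y0 ω, Y1 ω)) μ) :
    μ[fun ω => (W ω - μ[W|m] ω) * Y ω|m] =ᵐ[μ]
      fun ω => μ[W|m] ω * (1 - μ[W|m] ω) * (μ[Y1|m] ω - μ[Y0|m] ω) := by
  set p := μ[W|m]
  have hWY1 : μ[W * Y1|m] =ᵐ[μ] p * μ[Y1|m] :=
    condExp_binary_mul_ae_eq hWm hW hY1m hY1 (hUnconf.comp measurable_id measurable_snd)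
  have hWY0 : μ[W * Y0|m] =ᵐ[μ] p * μ[Y0|m] :=
    condExp_binary_mul_ae_eq hWm hW hY0m hY0 (hUnconf.comp measurable_id measurable_fst)
  have hWY1i := integrable_mul_of_binary hWm hW hY1
  have hWY0i := integrable_mul_of_binary hWm hW hY0
  have hYi := integrable_observed_outcome hWm hW hY0 hY1 hSUTVA
  have hY : μ[Y|m] =ᵐ[μ] p * μ[Y1|m] + (μ[Y0|m] - p * μ[Y0|m]) := by
    rw [observed_outcome_eq hSUTVA]
    filter_upwards [condExp_add hWY1i (hY0.sub hWY0i) m, condExp_sub hY0 hWY0i m, hWY1, hWY0]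
      with ω h h' h1 h0
    simp only [h, Pi.add_apply, h', Pi.sub_apply, h1, h0]
  have hpY : μ[p * Y|m] =ᵐ[μ] p * μ[Y|m] :=
    condExp_stronglyMeasurable_mul_of_bound hm stronglyMeasurable_condExp hYi 1
      (ae_abs_condExp_le_one_of_binary hW)
  have hpYi : Integrable (p * Y) μ :=
    hYi.bdd_mul (stronglyMeasurable_condExp.mono hm).aestronglyMeasurable
      (ae_abs_condExp_le_one_of_binary hW)
  have hresidual : (fun ω => (W ω - p ω) * Y ω) = W * Y1 - p * Y := by
    ext ω
    rcases hW ω with h | h <;> simp only [hSUTVA, h, Pi.sub_apply, Pi.mul_apply] <;> ring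
  rw [hresidual]
  filter_upwards [condExp_sub hWY1i hpYi m, hWY1, hpY, hY] with ω h h1 hp hY
  simp only [h, Pi.sub_apply, h1, hp, Pi.mul_apply, hY, Pi.add_apply]
  ring

end BinaryTreatment

theorem stmt_0_general
    {Ω 𝒳 : Type*} [MeasurableSpace Ω] [StandardBorelSpace Ω] [MeasurableSpace 𝒳]
    (P : Measure Ω) [IsProbabilityMeasure P]
    (X : Ω → 𝒳) (hX : Measurable X)
    (W : Ω → ℝ) (hWm : Measurable W) (hWbin : ∀ ω, W ω = 0 ∨ W ω = 1)
    (Y0 Y1 : Ω → ℝ) (hY0m : Measurable Y0) (hY1m : Measurable Y1)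
    (CY : ℝ) (hYbdd : ∀ ω, |Y0 ω| ≤ CY ∧ |Y1 ω| ≤ CY)
    (Y : Ω → ℝ) (hSUTVA : ∀ ω, Y ω = W ω * Y1 ω + (1 - W ω) * Y0 ω)
    (hUnconf : CondIndepFun (sigmaAlg X) hX.comap_le W (fun ω => (Y0 ω, Y1 ω)) P)
    (e : 𝒳 → ℝ)
    (hprop : P[W|sigmaAlg X] =ᵐ[P] (fun ω => e (X ω)))
    (μ0 μ1 : 𝒳 → ℝ)
    (hμ0c : P[Y0|sigmaAlg X] =ᵐ[P] (fun ω => μ0 (X ω)))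
    (hμ1c : P[Y1|sigmaAlg X] =ᵐ[P] (fun ω => μ1 (X ω))) :
    P[(fun ω => e (X ω) * (1 - e (X ω)) * (μ1 (X ω) - μ0 (X ω)) - (W ω - e (X ω)) * Y ω)|sigmaAlg X]
      =ᵐ[P] 0 := by
  have hm := hX.comap_le
  have hY0 : Integrable Y0 P := (integrable_const CY).mono' hY0m.aestronglyMeasurable
    (Eventually.of_forall fun ω => (hYbdd ω).1)
  have hY1 : Integrable Y1 P := (integrable_const CY).mono' hY1m.aestronglyMeasurable
    (Eventually.of_forall fun ω => (hYbdd ω).2)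
  set Z := fun ω => (W ω - P[W|sigmaAlg X] ω) * Y ω
  have hZ := condExp_treatmentResidual_mul_outcome_ae_eq hm hWm hWbin hY0m hY1m hY0 hY1 hSUTVA
    hUnconf
  have hF : (fun ω => e (X ω) * (1 - e (X ω)) * (μ1 (X ω) - μ0 (X ω)) - (W ω - e (X ω)) * Y ω)
      =ᵐ[P] P[Z|sigmaAlg X] - Z := by
    filter_upwards [hprop, hμ0c, hμ1c, hZ] with ω hp h0 h1 hz
    simp only [Pi.sub_apply, hz, Z, hp, h0, h1]
  exact (condExp_congr_ae hF).trans (condExp_condExp_sub_ae_eq_zero hm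
    (integrable_sub_condExp_mul_of_binary hm hWm hWbin
      (integrable_observed_outcome hWm hWbin hY0 hY1 hSUTVA)))

theorem stmt_0
    {Ω 𝒳 : Type*} [MeasurableSpace Ω] [StandardBorelSpace Ω] [MeasurableSpace 𝒳]
    (P : Measure Ω) [IsProbabilityMeasure P]
    (X : Ω → 𝒳) (hX : Measurable X)
    (W : Ω → ℝ) (hWm : Measurable W) (hWbin : ∀ ω, W ω = 0 ∨ W ω = 1)
    (Y0 Y1 : Ω → ℝ) (hY0m : Measurable Y0) (hY1m : Measurable Y1)
    (CY : ℝ) (hYbdd : ∀ ω, |Y0 ω| ≤ CY ∧ |Y1 ω| ≤ CY)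
    (Y : Ω → ℝ) (hSUTVA : ∀ ω, Y ω = W ω * Y1 ω + (1 - W ω) * Y0 ω)
    (hUnconf : CondIndepFun (sigmaAlg X) hX.comap_le W (fun ω => (Y0 ω, Y1 ω)) P)
    (e : 𝒳 → ℝ) (hem : Measurable e)
    (hprop : P[W|sigmaAlg X] =ᵐ[P] (fun ω => e (X ω)))
    (hoverlap : ∀ᵐ ω ∂P, 0 < e (X ω) ∧ e (X ω) < 1)
    (μ0 μ1 : 𝒳 → ℝ) (hμ0m : Measurable μ0) (hμ1m : Measurable μ1)
    (Cμ : ℝ) (hμbdd : ∀ x, |μ0 x| ≤ Cμ ∧ |μ1 x| ≤ Cμ)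
    (hμ0c : P[Y0|sigmaAlg X] =ᵐ[P] (fun ω => μ0 (X ω)))
    (hμ1c : P[Y1|sigmaAlg X] =ᵐ[P] (fun ω => μ1 (X ω))) :
    P[(fun ω => e (X ω) * (1 - e (X ω)) * (μ1 (X ω) - μ0 (X ω)) - (W ω - e (X ω)) * Y ω)|sigmaAlg X]
      =ᵐ[P] 0 :=
  stmt_0_general P X hX W hWm hWbin Y0 Y1 hY0m hY1m CY hYbdd Y hSUTVA hUnconf e hprop μ0 μ1 hμ0c
    hμ1c
end

section
/- Under unconfoundedness, SUTVA, population overlap and the linear-CATE assumption τ(X) = βᵀZ(X), for every real ν ≥ 0 the vector moment condition E[(e(X)(1−e(X)))^ν · Z(X) · ((W−e(X))·Y − e(X)(1−e(X))·Z(X)ᵀβ)] = 0 holds in ℝ^d, and the random vector inside the expectation is almost surely bounded. -/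
open MeasureTheory ProbabilityTheory Filter Set

/-!
For `W ∈ {0,1}` and `Y = W Y₁ + (1 - W) Y₀`, the weighted moment `φ ((W - e) Y - e (1 - e) τ)`
splits as `φ (1 - e) (W - e) Y₁ + φ e (W - e) Y₀ + φ e (1 - e) (Y₁ - Y₀ - τ)`. The last term
integrates to zero because `E[Y₁ - Y₀ | X] = μ₁(X) - μ₀(X) = τ(X)`. For the first two, conditional
independence gives `E[(W - e) 1{V ∈ t} | X] = e P(V ∈ t | X) - e P(V ∈ t | X) = 0` for
`V = (Y₀, Y₁)`, so for `σ(X)`-measurable bounded `φ` the product `φ (W - e)` integrates to zero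
over every event of `σ(V)`. Its conditional expectation given `σ(V)` thus vanishes, which makes it
orthogonal to every bounded function of `V`; no approximation of that function by simple functions
is needed.
-/

section
variable {Ω γ : Type*} {m mΩ : MeasurableSpace Ω} [MeasurableSpace γ] {P : Measure Ω}
  [IsFiniteMeasure P]

lemma integral_mul_eq_zero_of_condExp_ae_eq_zero (hm : m ≤ mΩ) {φ ψ : Ω → ℝ} {C : ℝ}
    (hφ : StronglyMeasurable[m] φ) (hφC : ∀ᵐ ω ∂P, |φ ω| ≤ C) (hψ : Integrable ψ P)
    (hψm : P[ψ|m] =ᵐ[P] 0) : ∫ ω, φ ω * ψ ω ∂P = 0 := by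
  have hφψ : Integrable (φ * ψ) P := hψ.bdd_mul (hφ.mono hm).aestronglyMeasurable hφC
  calc ∫ ω, φ ω * ψ ω ∂P = ∫ ω, (P[φ * ψ|m]) ω ∂P := (integral_condExp hm).symm
    _ = ∫ ω, (φ * 0) ω ∂P :=
      integral_congr_ae ((condExp_mul_of_stronglyMeasurable_left hφ hφψ hψ).trans
        (EventuallyEq.rfl.mul hψm))
    _ = 0 := by simp

lemma integral_comp_mul_eq_zero_of_setIntegral_preimage_eq_zero {V : Ω → γ} (hV : Measurable V)
    {D : Ω → ℝ} (hD : Integrable D P)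
    (hDV : ∀ t, MeasurableSet t → ∫ ω in V ⁻¹' t, D ω ∂P = 0)
    {ψ : γ → ℝ} {C : ℝ} (hψ : Measurable ψ) (hψC : ∀ ω, |ψ (V ω)| ≤ C) :
    ∫ ω, ψ (V ω) * D ω ∂P = 0 := by
  have hcond : P[D|MeasurableSpace.comap V ‹_›] =ᵐ[P] 0 := by
    refine (ae_eq_condExp_of_forall_setIntegral_eq hV.comap_le hD
      (fun _ _ _ => integrableOn_zero) ?_ aestronglyMeasurable_zero).symm
    rintro _ ⟨t, ht, rfl⟩ _
    simp [hDV t ht]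
  exact integral_mul_eq_zero_of_condExp_ae_eq_zero hV.comap_le
    (hψ.comp (comap_measurable V)).stronglyMeasurable (Eventually.of_forall hψC) hD hcond

variable [StandardBorelSpace Ω]

lemma ProbabilityTheory.CondIndepFun.condExp_sub_mul_indicator_eq_zero {hm : m ≤ mΩ}
    {W : Ω → ℝ} {V : Ω → γ}
    (hind : CondIndepFun m hm W V P) (hWm : Measurable W) (hV : Measurable V)
    (hW : ∀ ω, W ω = 0 ∨ W ω = 1) {eh : Ω → ℝ} (heh : StronglyMeasurable[m] eh)
    (hWeh : P[W|m] =ᵐ[P] eh) {t : Set γ} (ht : MeasurableSet t) :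
    P[(W - eh) * (V ⁻¹' t).indicator 1|m] =ᵐ[P] 0 := by
  set I : Ω → ℝ := (V ⁻¹' t).indicator 1
  have hI : Integrable I P := (integrable_const 1).indicator (hV ht)
  have hIC : ∀ ω, ‖I ω‖ ≤ 1 := fun ω => by
    by_cases h : ω ∈ V ⁻¹' t <;> simp [I, h]
  have hWC : ∀ ω, ‖W ω‖ ≤ 1 := fun ω => by rcases hW ω with h | h <;> simp [h]
  have hehI : Integrable (eh * I) P :=
    (integrable_condExp.congr hWeh).mul_bdd hI.aestronglyMeasurable (Eventually.of_forall hIC)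
  have hWI : Integrable (W * I) P :=
    hI.bdd_mul hWm.aestronglyMeasurable (Eventually.of_forall hWC)
  have hprod : P[W * I|m] =ᵐ[P] eh * P[I|m] := by
    have h := (condIndepFun_iff_condExp_inter_preimage_eq_mul hWm hV).mp hind {1} t
      (measurableSet_singleton 1) ht
    have hW1 : (W ⁻¹' {1}).indicator 1 = W := by
      ext ω
      rcases hW ω with h | h <;> simp [h]
    rw [← hW1] at hWeh ⊢
    rw [← Set.inter_indicator_one]
    exact h.trans (hWeh.mul EventuallyEq.rfl)
  calc P[(W - eh) * I|m] =ᵐ[P] P[W * I|m] - P[eh * I|m] := by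
        rw [sub_mul]; exact condExp_sub hWI hehI m
    _ =ᵐ[P] eh * P[I|m] - eh * P[I|m] :=
        hprod.sub (condExp_mul_of_stronglyMeasurable_left heh hehI hI)
    _ = 0 := sub_self _

lemma ProbabilityTheory.CondIndepFun.integral_mul_sub_mul_comp_eq_zero {hm : m ≤ mΩ}
    {W : Ω → ℝ} {V : Ω → γ}
    (hind : CondIndepFun m hm W V P) (hWm : Measurable W) (hV : Measurable V)
    (hW : ∀ ω, W ω = 0 ∨ W ω = 1) {eh : Ω → ℝ} (heh : StronglyMeasurable[m] eh)
    (hWeh : P[W|m] =ᵐ[P] eh) {φ : Ω → ℝ} {Cφ : ℝ} (hφ : StronglyMeasurable[m] φ)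
    (hφC : ∀ᵐ ω ∂P, |φ ω| ≤ Cφ) {ψ : γ → ℝ} {Cψ : ℝ} (hψ : Measurable ψ)
    (hψC : ∀ ω, |ψ (V ω)| ≤ Cψ) :
    ∫ ω, φ ω * (W ω - eh ω) * ψ (V ω) ∂P = 0 := by
  have hWeh_int : Integrable (W - eh) P := by
    refine (Integrable.of_bound hWm.aestronglyMeasurable 1
      (Eventually.of_forall fun ω => ?_)).sub (integrable_condExp.congr hWeh)
    rcases hW ω with h | h <;> simp [h]
  have hD : Integrable (φ * (W - eh)) P :=
    hWeh_int.bdd_mul (hφ.mono hm).aestronglyMeasurable hφC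
  have hDV : ∀ t, MeasurableSet t → ∫ ω in V ⁻¹' t, (φ * (W - eh)) ω ∂P = 0 := by
    intro t ht
    have hDt : (V ⁻¹' t).indicator (φ * (W - eh)) =
        φ * ((W - eh) * (V ⁻¹' t).indicator 1) := by
      ext ω
      by_cases h : ω ∈ V ⁻¹' t <;> simp [h]
    have hWeh_t : Integrable ((W - eh) * (V ⁻¹' t).indicator 1) P := by
      refine (hWeh_int.indicator (hV ht)).congr (Eventually.of_forall fun ω => ?_)
      by_cases h : ω ∈ V ⁻¹' t <;> simp [h]
    rw [← integral_indicator (hV ht), hDt]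
    exact integral_mul_eq_zero_of_condExp_ae_eq_zero hm hφ hφC hWeh_t
      (hind.condExp_sub_mul_indicator_eq_zero hWm hV hW heh hWeh ht)
  rw [← integral_comp_mul_eq_zero_of_setIntegral_preimage_eq_zero hV hD hDV hψ hψC]
  congr 1 with ω
  simp only [Pi.mul_apply, Pi.sub_apply]
  ring
end

lemma abs_rpow_mul_one_sub_le_one {p ν : ℝ} (hp : p ∈ Icc 0 1) (hν : 0 ≤ ν) :
    |(p * (1 - p)) ^ ν| ≤ 1 := by
  have h0 : 0 ≤ p * (1 - p) := mul_nonneg hp.1 (sub_nonneg.2 hp.2)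
  rw [abs_of_nonneg (Real.rpow_nonneg h0 ν)]
  exact Real.rpow_le_one h0 (by nlinarith [hp.1, hp.2]) hν

lemma condExp_sub_sub_comp_ae_eq_zero {Ω 𝒳 : Type*} [MeasurableSpace Ω] [MeasurableSpace 𝒳]
    {P : Measure Ω} [IsFiniteMeasure P] {X : Ω → 𝒳} (hX : Measurable X) {Y0 Y1 : Ω → ℝ}
    (hY0 : Integrable Y0 P) (hY1 : Integrable Y1 P) {μ0 μ1 τ : 𝒳 → ℝ} (hτm : Measurable τ)
    (hτX : Integrable (fun ω => τ (X ω)) P) (hCATE : ∀ x, μ1 x - μ0 x = τ x)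
    (hμ0c : P[Y0|sigmaAlg X] =ᵐ[P] (fun ω => μ0 (X ω)))
    (hμ1c : P[Y1|sigmaAlg X] =ᵐ[P] (fun ω => μ1 (X ω))) :
    P[Y1 - Y0 - fun ω => τ (X ω)|sigmaAlg X] =ᵐ[P] 0 := by
  have hτ : P[fun ω => τ (X ω)|sigmaAlg X] = fun ω => τ (X ω) :=
    condExp_of_stronglyMeasurable hX.comap_le
      (hτm.comp (comap_measurable X)).stronglyMeasurable hτX
  filter_upwards [condExp_sub (hY1.sub hY0) hτX (sigmaAlg X), condExp_sub hY1 hY0 (sigmaAlg X),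
    hμ1c, hμ0c] with ω h h' h1 h0
  rw [Pi.zero_apply, h, Pi.sub_apply, h', Pi.sub_apply, h1, h0, hτ, hCATE, sub_self]

theorem integral_mul_residual_moment_eq_zero
    {Ω 𝒳 : Type*} [MeasurableSpace Ω] [StandardBorelSpace Ω] [MeasurableSpace 𝒳]
    {P : Measure Ω} [IsFiniteMeasure P] {X : Ω → 𝒳} (hX : Measurable X)
    {W : Ω → ℝ} (hWm : Measurable W) (hWbin : ∀ ω, W ω = 0 ∨ W ω = 1)
    {Y0 Y1 : Ω → ℝ} (hY0m : Measurable Y0) (hY1m : Measurable Y1)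
    {CY : ℝ} (hYbdd : ∀ ω, |Y0 ω| ≤ CY ∧ |Y1 ω| ≤ CY)
    {Y : Ω → ℝ} (hSUTVA : ∀ ω, Y ω = W ω * Y1 ω + (1 - W ω) * Y0 ω)
    (hUnconf : CondIndepFun (sigmaAlg X) hX.comap_le W (fun ω => (Y0 ω, Y1 ω)) P)
    {e : 𝒳 → ℝ} (hem : Measurable e) (hprop : P[W|sigmaAlg X] =ᵐ[P] (fun ω => e (X ω)))
    (he01 : ∀ᵐ ω ∂P, e (X ω) ∈ Icc 0 1)
    {μ0 μ1 τ : 𝒳 → ℝ} (hτm : Measurable τ) (hCATE : ∀ x, μ1 x - μ0 x = τ x)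
    (hμ0c : P[Y0|sigmaAlg X] =ᵐ[P] (fun ω => μ0 (X ω)))
    (hμ1c : P[Y1|sigmaAlg X] =ᵐ[P] (fun ω => μ1 (X ω)))
    {φ : Ω → ℝ} {C : ℝ} (hφ : StronglyMeasurable[sigmaAlg X] φ) (hφC : ∀ᵐ ω ∂P, |φ ω| ≤ C) :
    ∫ ω, φ ω * ((W ω - e (X ω)) * Y ω - e (X ω) * (1 - e (X ω)) * τ (X ω)) ∂P = 0 := by
  set a : Ω → ℝ := fun ω => e (X ω)
  have ha : StronglyMeasurable[sigmaAlg X] a := (hem.comp (comap_measurable X)).stronglyMeasurable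
  have hm : sigmaAlg X ≤ ‹MeasurableSpace Ω› := hX.comap_le
  have hY0 : Integrable Y0 P :=
    .of_bound hY0m.aestronglyMeasurable CY (.of_forall fun ω => (hYbdd ω).1)
  have hY1 : Integrable Y1 P :=
    .of_bound hY1m.aestronglyMeasurable CY (.of_forall fun ω => (hYbdd ω).2)
  have hτX : Integrable (fun ω => τ (X ω)) P :=
    ((integrable_condExp.congr hμ1c).sub (integrable_condExp.congr hμ0c)).congr
      (.of_forall fun ω => hCATE (X ω))
  have hφm : Measurable φ := (hφ.mono hm).measurable
  have hbd : ∀ᵐ ω ∂P, ‖φ ω‖ ≤ C ∧ ‖a ω‖ ≤ 1 ∧ ‖1 - a ω‖ ≤ 1 ∧ ‖W ω - a ω‖ ≤ 1 := by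
    filter_upwards [hφC, he01] with ω hφω ⟨h0, h1⟩
    rcases hWbin ω with h | h <;> refine ⟨hφω, ?_, ?_, ?_⟩ <;>
      rw [Real.norm_eq_abs, abs_le] <;> constructor <;> linarith
  have hT1 : Integrable (fun ω => φ ω * (1 - a ω) * (W ω - a ω) * Y1 ω) P :=
    hY1.bdd_mul (by fun_prop) (c := C * 1 * 1) <| hbd.mono fun ω ⟨hφω, _, h1a, hWa⟩ =>
      norm_mul_le_of_le (norm_mul_le_of_le hφω h1a) hWa
  have hT2 : Integrable (fun ω => φ ω * a ω * (W ω - a ω) * Y0 ω) P :=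
    hY0.bdd_mul (by fun_prop) (c := C * 1 * 1) <| hbd.mono fun ω ⟨hφω, haω, _, hWa⟩ =>
      norm_mul_le_of_le (norm_mul_le_of_le hφω haω) hWa
  have hT3 : Integrable (fun ω => φ ω * (a ω * (1 - a ω)) * (Y1 ω - Y0 ω - τ (X ω))) P :=
    ((hY1.sub hY0).sub hτX).bdd_mul (by fun_prop) (c := C * (1 * 1)) <|
      hbd.mono fun ω ⟨hφω, haω, h1a, _⟩ => norm_mul_le_of_le hφω (norm_mul_le_of_le haω h1a)
  have hdecomp : ∀ ω, φ ω * ((W ω - a ω) * Y ω - a ω * (1 - a ω) * τ (X ω)) =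
      φ ω * (1 - a ω) * (W ω - a ω) * Y1 ω + φ ω * a ω * (W ω - a ω) * Y0 ω +
        φ ω * (a ω * (1 - a ω)) * (Y1 ω - Y0 ω - τ (X ω)) := fun ω => by
    rcases hWbin ω with h | h <;> simp only [hSUTVA, h] <;> ring
  refine (integral_congr_ae (.of_forall hdecomp)).trans ?_
  have hV : Measurable fun ω => (Y0 ω, Y1 ω) := hY0m.prodMk hY1m
  have hI1 := hUnconf.integral_mul_sub_mul_comp_eq_zero hWm hV hWbin ha hprop
    (hφ.mul (stronglyMeasurable_const.sub ha)) (Cφ := C * 1)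
    (hbd.mono fun ω ⟨hφω, _, h1a, _⟩ => norm_mul_le_of_le hφω h1a) measurable_snd
    (fun ω => (hYbdd ω).2)
  have hI2 := hUnconf.integral_mul_sub_mul_comp_eq_zero hWm hV hWbin ha hprop
    (hφ.mul ha) (Cφ := C * 1)
    (hbd.mono fun ω ⟨hφω, haω, _, _⟩ => norm_mul_le_of_le hφω haω) measurable_fst
    (fun ω => (hYbdd ω).1)
  have hI3 := integral_mul_eq_zero_of_condExp_ae_eq_zero hm
    (hφ.mul (ha.mul (stronglyMeasurable_const.sub ha))) (C := C * (1 * 1))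
    (hbd.mono fun ω ⟨hφω, haω, h1a, _⟩ => norm_mul_le_of_le hφω (norm_mul_le_of_le haω h1a))
    ((hY1.sub hY0).sub hτX)
    (condExp_sub_sub_comp_ae_eq_zero hX hY0 hY1 hτm hτX hCATE hμ0c hμ1c)
  simp only [Pi.mul_apply, Pi.sub_apply] at hI1 hI2 hI3
  rw [integral_add ?_ hT3, integral_add hT1 hT2, hI1, hI2, hI3, add_zero, add_zero]
  exact hT1.add hT2

theorem stmt_1_general
    {Ω 𝒳 : Type*} [MeasurableSpace Ω] [StandardBorelSpace Ω] [MeasurableSpace 𝒳]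
    (P : Measure Ω) [IsProbabilityMeasure P]
    (X : Ω → 𝒳) (hX : Measurable X)
    (W : Ω → ℝ) (hWm : Measurable W) (hWbin : ∀ ω, W ω = 0 ∨ W ω = 1)
    (Y0 Y1 : Ω → ℝ) (hY0m : Measurable Y0) (hY1m : Measurable Y1)
    (CY : ℝ) (hYbdd : ∀ ω, |Y0 ω| ≤ CY ∧ |Y1 ω| ≤ CY)
    (Y : Ω → ℝ) (hSUTVA : ∀ ω, Y ω = W ω * Y1 ω + (1 - W ω) * Y0 ω)
    (hUnconf : CondIndepFun (sigmaAlg X) hX.comap_le W (fun ω => (Y0 ω, Y1 ω)) P)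
    (e : 𝒳 → ℝ) (hem : Measurable e)
    (hprop : P[W|sigmaAlg X] =ᵐ[P] (fun ω => e (X ω)))
    (hoverlap : ∀ᵐ ω ∂P, 0 < e (X ω) ∧ e (X ω) < 1)
    (μ0 μ1 : 𝒳 → ℝ)
    (hμ0c : P[Y0|sigmaAlg X] =ᵐ[P] (fun ω => μ0 (X ω)))
    (hμ1c : P[Y1|sigmaAlg X] =ᵐ[P] (fun ω => μ1 (X ω)))
    {d : ℕ} (Z : 𝒳 → Fin d → ℝ) (hZm : Measurable Z)
    (CZ : ℝ) (hZbdd : ∀ x j, |Z x j| ≤ CZ)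
    (β : Fin d → ℝ) (hlinCATE : ∀ x, μ1 x - μ0 x = ∑ j, β j * Z x j) :
    ∀ ν : ℝ, 0 ≤ ν →
      (∀ j : Fin d,
        ∫ ω, (e (X ω) * (1 - e (X ω))) ^ ν * Z (X ω) j * ((W ω - e (X ω)) * Y ω - e (X ω) * (1 - e (X ω)) * ∑ k, β k * Z (X ω) k) ∂P = 0) ∧
      (∃ C : ℝ, ∀ᵐ ω ∂P, ∀ j : Fin d, |(e (X ω) * (1 - e (X ω))) ^ ν * Z (X ω) j * ((W ω - e (X ω)) * Y ω - e (X ω) * (1 - e (X ω)) * ∑ k, β k * Z (X ω) k)| ≤ C) := by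
  intro ν hν
  have he01 : ∀ᵐ ω ∂P, e (X ω) ∈ Icc 0 1 := hoverlap.mono fun ω h => ⟨h.1.le, h.2.le⟩
  have hweight : ∀ j, ∀ᵐ ω ∂P, ‖(e (X ω) * (1 - e (X ω))) ^ ν * Z (X ω) j‖ ≤ 1 * CZ :=
    fun j => he01.mono fun ω h => norm_mul_le_of_le (abs_rpow_mul_one_sub_le_one h hν) (hZbdd _ j)
  refine ⟨fun j => integral_mul_residual_moment_eq_zero hX hWm hWbin hY0m hY1m hYbdd hSUTVA hUnconf
    hem hprop he01 (by fun_prop) hlinCATE hμ0c hμ1c ?_ (hweight j), ?_⟩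
  · exact ((show Measurable fun x => (e x * (1 - e x)) ^ ν * Z x j by fun_prop).comp
      (comap_measurable X)).stronglyMeasurable
  refine ⟨1 * CZ * (1 * CY + 1 * ∑ k, ‖β k‖ * CZ), ?_⟩
  filter_upwards [he01, ae_all_iff.2 hweight] with ω ⟨h0, h1⟩ hw j
  have hY : ‖Y ω‖ ≤ CY := by rcases hWbin ω with h | h <;> simp [hSUTVA, h, hYbdd]
  have hWe : ‖W ω - e (X ω)‖ ≤ 1 := by
    rcases hWbin ω with h | h <;> rw [Real.norm_eq_abs, abs_le] <;> constructor <;> linarith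
  have he : ‖e (X ω) * (1 - e (X ω))‖ ≤ 1 := by
    rw [Real.norm_eq_abs, abs_le]; constructor <;> nlinarith
  have hτ : ‖∑ k, β k * Z (X ω) k‖ ≤ ∑ k, ‖β k‖ * CZ :=
    norm_sum_le_of_le _ fun k _ => norm_mul_le_of_le le_rfl (hZbdd _ k)
  rw [← Real.norm_eq_abs]
  exact norm_mul_le_of_le (hw j) ((norm_sub_le _ _).trans
    (add_le_add (norm_mul_le_of_le hWe hY) (norm_mul_le_of_le he hτ)))

theorem stmt_1
    {Ω 𝒳 : Type*} [MeasurableSpace Ω] [StandardBorelSpace Ω] [MeasurableSpace 𝒳]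
    (P : Measure Ω) [IsProbabilityMeasure P]
    (X : Ω → 𝒳) (hX : Measurable X)
    (W : Ω → ℝ) (hWm : Measurable W) (hWbin : ∀ ω, W ω = 0 ∨ W ω = 1)
    (Y0 Y1 : Ω → ℝ) (hY0m : Measurable Y0) (hY1m : Measurable Y1)
    (CY : ℝ) (hYbdd : ∀ ω, |Y0 ω| ≤ CY ∧ |Y1 ω| ≤ CY)
    (Y : Ω → ℝ) (hSUTVA : ∀ ω, Y ω = W ω * Y1 ω + (1 - W ω) * Y0 ω)
    (hUnconf : CondIndepFun (sigmaAlg X) hX.comap_le W (fun ω => (Y0 ω, Y1 ω)) P)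
    (e : 𝒳 → ℝ) (hem : Measurable e)
    (hprop : P[W|sigmaAlg X] =ᵐ[P] (fun ω => e (X ω)))
    (hoverlap : ∀ᵐ ω ∂P, 0 < e (X ω) ∧ e (X ω) < 1)
    (μ0 μ1 : 𝒳 → ℝ) (hμ0m : Measurable μ0) (hμ1m : Measurable μ1)
    (Cμ : ℝ) (hμbdd : ∀ x, |μ0 x| ≤ Cμ ∧ |μ1 x| ≤ Cμ)
    (hμ0c : P[Y0|sigmaAlg X] =ᵐ[P] (fun ω => μ0 (X ω)))
    (hμ1c : P[Y1|sigmaAlg X] =ᵐ[P] (fun ω => μ1 (X ω)))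
    {d : ℕ} (Z : 𝒳 → Fin d → ℝ) (hZm : Measurable Z)
    (CZ : ℝ) (hZbdd : ∀ x j, |Z x j| ≤ CZ)
    (β : Fin d → ℝ) (hlinCATE : ∀ x, μ1 x - μ0 x = ∑ j, β j * Z x j) :
    ∀ ν : ℝ, 0 ≤ ν →
      (∀ j : Fin d,
        ∫ ω, (e (X ω) * (1 - e (X ω))) ^ ν * Z (X ω) j * ((W ω - e (X ω)) * Y ω - e (X ω) * (1 - e (X ω)) * ∑ k, β k * Z (X ω) k) ∂P = 0) ∧
      (∃ C : ℝ, ∀ᵐ ω ∂P, ∀ j : Fin d, |(e (X ω) * (1 - e (X ω))) ^ ν * Z (X ω) j * ((W ω - e (X ω)) * Y ω - e (X ω) * (1 - e (X ω)) * ∑ k, β k * Z (X ω) k)| ≤ C) :=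
  stmt_1_general P X hX W hWm hWbin Y0 Y1 hY0m hY1m CY hYbdd Y hSUTVA hUnconf e hem hprop hoverlap
    μ0 μ1 hμ0c hμ1c Z hZm CZ hZbdd β hlinCATE
end

section
/- Fix reals ν1 ≥ 0, ν2 ≥ 0 and (ϑ1,ϑ2,ϑ3,ϑ4) ∈ ℝ⁴ with ϑ1+ϑ2 = 1 and ϑ3+ϑ4 = −1, and let ξ be a bounded measurable function on 𝒳×{0,1} with E[ξ(X,W) | σ(X)] = 0 a.s. Define the Generalized Non-Inverse Probability Weighting residual Ψ = e(X)^{ν1}(1−e(X))^{ν2}[(ϑ1·W + ϑ2·e(X) + ϑ3·W·e(X) + ϑ4·e(X)²)·τ(X) − (W−e(X))·Y] + ξ(X,W). Then under unconfoundedness, SUTVA, population overlap and bounded outcomes, E[Ψ | σ(X)] = 0 a.s. and E[Ψ² | σ(X)] is a.s. finite, even without strict overlap. -/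
open MeasureTheory ProbabilityTheory Filter Set

/-!
Write `p`, `μ₀`, `μ₁` for `E[W | X]`, `E[Y₀ | X]`, `E[Y₁ | X]`, and `Ψ(w, y)` for the residual
without `ξ`, evaluated at `W = w`, `Y = y`. For binary `W`, SUTVA gives
`Ψ(W, Y) = W Ψ(1, Y₁) + (1 - W) Ψ(0, Y₀)`, and each `Ψ(w, ·)` is affine with `σ(X)`-measurable
coefficients. Unconfoundedness gives `E[W Y₁ | X] = p μ₁` and `E[(1 - W) Y₀ | X] = (1 - p) μ₀`,
hence `E[Ψ | X] = p Ψ(1, μ₁) + (1 - p) Ψ(0, μ₀)`, which vanishes identically when `ϑ₁ + ϑ₂ = 1`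
and `ϑ₃ + ϑ₄ = -1`. Conditional independence yields the product rule only for indicators of
`{Y₁ ∈ t}`; it extends to `Y₁` itself because two densities that give `Y₁` the same law give it
the same mean.

Since `p = E[W | X] ∈ [0, 1]` and `|μ_w| ≤ sup |Y_w|`, `Ψ` is bounded once `ν₁, ν₂ ≥ 0`, and then
so is its conditional second moment.
-/

section CondIndep

variable {Ω : Type*} {m mΩ : MeasurableSpace Ω} {μ P : Measure Ω}

theorem integral_mul_eq_of_forall_setIntegral_preimage_eq {ρ σ Z : Ω → ℝ}
    (hρ : Integrable ρ μ) (hσ : Integrable σ μ) (hρ0 : 0 ≤ᵐ[μ] ρ) (hσ0 : 0 ≤ᵐ[μ] σ)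
    (hZ : Measurable Z)
    (h : ∀ t, MeasurableSet t → ∫ ω in Z ⁻¹' t, ρ ω ∂μ = ∫ ω in Z ⁻¹' t, σ ω ∂μ) :
    ∫ ω, ρ ω * Z ω ∂μ = ∫ ω, σ ω * Z ω ∂μ := by
  have integral_eq_map {f : Ω → ℝ} (hf : Integrable f μ) (hf0 : 0 ≤ᵐ[μ] f) :
      ∫ ω, f ω * Z ω ∂μ = ∫ y, y ∂(μ.withDensity fun ω => ENNReal.ofReal (f ω)).map Z := by
    rw [integral_map hZ.aemeasurable measurable_id'.aestronglyMeasurable,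
      integral_withDensity_eq_integral_toReal_smul₀ hf.aemeasurable.ennreal_ofReal
        (ae_of_all _ fun _ => ENNReal.ofReal_lt_top)]
    refine integral_congr_ae ?_
    filter_upwards [hf0] with ω hω
    simp [ENNReal.toReal_ofReal hω]
  rw [integral_eq_map hρ hρ0, integral_eq_map hσ hσ0]
  congr 1
  ext t ht
  rw [Measure.map_apply hZ ht, Measure.map_apply hZ ht, withDensity_apply _ (hZ ht),
    withDensity_apply _ (hZ ht),
    ← ofReal_integral_eq_lintegral_ofReal hρ.integrableOn (ae_restrict_of_ae hρ0),
    ← ofReal_integral_eq_lintegral_ofReal hσ.integrableOn (ae_restrict_of_ae hσ0), h t ht]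

theorem setIntegral_mul_condExp (hm : m ≤ mΩ) [IsFiniteMeasure P] {ζ g : Ω → ℝ}
    (hζ : StronglyMeasurable[m] ζ) {R : ℝ} (hζR : ∀ᵐ ω ∂P, ‖ζ ω‖ ≤ R) (hg : Integrable g P)
    {s : Set Ω} (hs : MeasurableSet[m] s) :
    ∫ ω in s, ζ ω * P[g|m] ω ∂P = ∫ ω in s, ζ ω * g ω ∂P := by
  calc ∫ ω in s, ζ ω * P[g|m] ω ∂P = ∫ ω in s, P[ζ * g|m] ω ∂P :=
        setIntegral_congr_ae (hm s hs) <| by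
          filter_upwards [condExp_stronglyMeasurable_mul_of_bound hm hζ hg R hζR] with ω h _
          exact h.symm
    _ = ∫ ω in s, ζ ω * g ω ∂P :=
        setIntegral_condExp hm (hg.bdd_mul (hζ.mono hm).aestronglyMeasurable hζR) hs

theorem condExp_indicator_mul_of_forall_preimage (hm : m ≤ mΩ) [IsFiniteMeasure P]
    {A : Set Ω} (hA : MeasurableSet A) {Z : Ω → ℝ} (hZ : Measurable Z) (hZi : Integrable Z P)
    (h : ∀ t, MeasurableSet t →
      P⟦A ∩ Z ⁻¹' t|m⟧ =ᵐ[P] fun ω => (P⟦A|m⟧) ω * (P⟦Z ⁻¹' t|m⟧) ω) :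
    P[fun ω => A.indicator (fun _ => (1 : ℝ)) ω * Z ω|m] =ᵐ[P]
      fun ω => (P⟦A|m⟧) ω * P[Z|m] ω := by
  set ζ := P⟦A|m⟧
  have hζ : StronglyMeasurable[m] ζ := stronglyMeasurable_condExp
  have hA1 (ω : Ω) : |A.indicator (fun _ => (1 : ℝ)) ω| ≤ 1 := by by_cases hω : ω ∈ A <;> simp [hω]
  have hA0 : 0 ≤ᵐ[P] A.indicator fun _ => (1 : ℝ) :=
    ae_of_all _ (indicator_nonneg fun _ _ => zero_le_one)
  have hζ0 : 0 ≤ᵐ[P] ζ := condExp_nonneg hA0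
  have hζ1 : ∀ᵐ ω ∂P, ‖ζ ω‖ ≤ 1 := ae_bdd_abs_condExp_of_ae_bdd_abs (ae_of_all _ hA1)
  have hAi : Integrable (A.indicator fun _ => (1 : ℝ)) P := (integrable_const 1).indicator hA
  have hset : ∀ s, MeasurableSet[m] s →
      ∫ ω in s, ζ ω * Z ω ∂P = ∫ ω in s, A.indicator (fun _ => (1 : ℝ)) ω * Z ω ∂P := by
    intro s hs
    refine integral_mul_eq_of_forall_setIntegral_preimage_eq integrable_condExp.restrict
      hAi.restrict (ae_restrict_of_ae hζ0) (ae_restrict_of_ae hA0) hZ fun t ht => ?_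
    have hB : MeasurableSet (Z ⁻¹' t) := hZ ht
    have hBi : Integrable ((Z ⁻¹' t).indicator fun _ => (1 : ℝ)) P :=
      (integrable_const 1).indicator hB
    have hζB :
        (Z ⁻¹' t).indicator ζ = fun ω => ζ ω * (Z ⁻¹' t).indicator (fun _ => (1 : ℝ)) ω := by
      ext ω; by_cases hω : ω ∈ Z ⁻¹' t <;> simp [hω]
    calc ∫ ω in Z ⁻¹' t, ζ ω ∂P.restrict s
        = ∫ ω in s, ζ ω * (Z ⁻¹' t).indicator (fun _ => (1 : ℝ)) ω ∂P := by
          rw [← integral_indicator hB, hζB]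
      _ = ∫ ω in s, ζ ω * (P⟦Z ⁻¹' t|m⟧) ω ∂P :=
          (setIntegral_mul_condExp hm hζ hζ1 hBi hs).symm
      _ = ∫ ω in s, (P⟦A ∩ Z ⁻¹' t|m⟧) ω ∂P :=
          setIntegral_congr_ae (hm s hs) (by filter_upwards [h t ht] with ω hω _ using hω.symm)
      _ = ∫ ω in s, (A ∩ Z ⁻¹' t).indicator (fun _ => (1 : ℝ)) ω ∂P :=
          setIntegral_condExp hm ((integrable_const 1).indicator (hA.inter hB)) hs
      _ = ∫ ω in Z ⁻¹' t, A.indicator (fun _ => (1 : ℝ)) ω ∂P.restrict s := by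
          rw [← integral_indicator hB, indicator_indicator, inter_comm]
  have hAZ : Integrable (fun ω => A.indicator (fun _ => (1 : ℝ)) ω * Z ω) P :=
    hZi.bdd_mul hAi.aestronglyMeasurable (ae_of_all _ hA1)
  refine (ae_eq_condExp_of_forall_setIntegral_eq hm hAZ
    (fun s _ _ => (integrable_condExp.bdd_mul (hζ.mono hm).aestronglyMeasurable hζ1).integrableOn)
    (fun s hs _ => ?_) (hζ.mul stronglyMeasurable_condExp).aestronglyMeasurable).symm
  rw [setIntegral_mul_condExp hm hζ hζ1 hZi hs, hset s hs]

theorem condExp_finsetSum_mul_of_bound (hm : m ≤ mΩ) [IsFiniteMeasure P] {ι : Type*}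
    (s : Finset ι) {c U : ι → Ω → ℝ} (hc : ∀ i ∈ s, StronglyMeasurable[m] (c i))
    (hcR : ∀ i ∈ s, ∃ R, ∀ᵐ ω ∂P, ‖c i ω‖ ≤ R) (hU : ∀ i ∈ s, Integrable (U i) P) :
    P[fun ω => ∑ i ∈ s, c i ω * U i ω|m] =ᵐ[P] fun ω => ∑ i ∈ s, c i ω * P[U i|m] ω := by
  have hcU : ∀ i ∈ s, Integrable (c i * U i) P := fun i hi =>
    (hU i hi).bdd_mul ((hc i hi).mono hm).aestronglyMeasurable (hcR i hi).choose_spec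
  have hpull : ∀ᵐ ω ∂P, ∀ i ∈ s, P[c i * U i|m] ω = c i ω * P[U i|m] ω :=
    (eventually_all_finset s).2 fun i hi =>
      condExp_stronglyMeasurable_mul_of_bound hm (hc i hi) (hU i hi) _ (hcR i hi).choose_spec
  have hsum : (fun ω => ∑ i ∈ s, c i ω * U i ω) = ∑ i ∈ s, c i * U i := by
    ext ω; simp
  filter_upwards [hsum ▸ condExp_finsetSum hcU m, hpull] with ω h1 h2
  rw [h1, Finset.sum_apply]
  exact Finset.sum_congr rfl h2

theorem ProbabilityTheory.CondIndepFun.condExp_mul_of_binary [StandardBorelSpace Ω] {hm : m ≤ mΩ}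
    [IsFiniteMeasure P] {W Z : Ω → ℝ} (hind : CondIndepFun m hm W Z P) (hW : Measurable W)
    (hWbin : ∀ ω, W ω = 0 ∨ W ω = 1) (hZ : Measurable Z) (hZi : Integrable Z P) :
    P[W * Z|m] =ᵐ[P] P[W|m] * P[Z|m] := by
  have hWA : W = (W ⁻¹' {1}).indicator fun _ => 1 := by
    ext ω; rcases hWbin ω with h | h <;> simp [h]
  rw [condIndepFun_iff_condExp_inter_preimage_eq_mul hW hZ] at hind
  rw [hWA]
  exact condExp_indicator_mul_of_forall_preimage hm (hW (measurableSet_singleton 1)) hZ hZi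
    fun t ht => hind {1} t (measurableSet_singleton 1) ht

theorem condExp_one_sub (hm : m ≤ mΩ) [IsFiniteMeasure P] {W : Ω → ℝ} (hW : Integrable W P) :
    P[1 - W|m] =ᵐ[P] 1 - P[W|m] := by
  have h := condExp_sub (m := m) (integrable_const (1 : ℝ)) hW
  rwa [condExp_const hm] at h

theorem ProbabilityTheory.CondIndepFun.condExp_one_sub_mul_of_binary [StandardBorelSpace Ω]
    {hm : m ≤ mΩ} [IsFiniteMeasure P] {W Z : Ω → ℝ} (hind : CondIndepFun m hm W Z P)
    (hW : Measurable W) (hWbin : ∀ ω, W ω = 0 ∨ W ω = 1) (hZ : Measurable Z)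
    (hZi : Integrable Z P) :
    P[(1 - W) * Z|m] =ᵐ[P] (1 - P[W|m]) * P[Z|m] := by
  have hind' : CondIndepFun m hm (1 - W) Z P :=
    hind.comp (measurable_const.sub measurable_id) measurable_id
  have hWi : Integrable W P :=
    Integrable.of_bound hW.aestronglyMeasurable 1
      (ae_of_all _ fun ω => by rcases hWbin ω with h | h <;> simp [h])
  filter_upwards [hind'.condExp_mul_of_binary (by fun_prop)
    (fun ω => by rcases hWbin ω with h | h <;> simp [h]) hZ hZi, condExp_one_sub hm hWi] with ω h h1
  rw [h, Pi.mul_apply, h1, Pi.mul_apply]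

theorem ProbabilityTheory.CondIndepFun.condExp_binary_affine [StandardBorelSpace Ω]
    {hm : m ≤ mΩ} [IsFiniteMeasure P] {W Y0 Y1 ζ : Ω → ℝ}
    (hind : CondIndepFun m hm W (fun ω => (Y0 ω, Y1 ω)) P) (hW : Measurable W)
    (hWbin : ∀ ω, W ω = 0 ∨ W ω = 1) (hY0 : Measurable Y0) (hY1 : Measurable Y1)
    (hY0i : Integrable Y0 P) (hY1i : Integrable Y1 P) (hζ : Integrable ζ P)
    {α0 β0 α1 β1 : Ω → ℝ} (hα0 : StronglyMeasurable[m] α0) (hβ0 : StronglyMeasurable[m] β0)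
    (hα1 : StronglyMeasurable[m] α1) (hβ1 : StronglyMeasurable[m] β1)
    (hα0R : ∃ R, ∀ᵐ ω ∂P, ‖α0 ω‖ ≤ R) (hβ0R : ∃ R, ∀ᵐ ω ∂P, ‖β0 ω‖ ≤ R)
    (hα1R : ∃ R, ∀ᵐ ω ∂P, ‖α1 ω‖ ≤ R) (hβ1R : ∃ R, ∀ᵐ ω ∂P, ‖β1 ω‖ ≤ R) :
    P[fun ω => W ω * (α1 ω + β1 ω * Y1 ω) + (1 - W ω) * (α0 ω + β0 ω * Y0 ω) + ζ ω|m] =ᵐ[P]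
      fun ω => P[W|m] ω * (α1 ω + β1 ω * P[Y1|m] ω) +
        (1 - P[W|m] ω) * (α0 ω + β0 ω * P[Y0|m] ω) + P[ζ|m] ω := by
  have hW1 (ω : Ω) : |W ω| ≤ 1 := by rcases hWbin ω with h | h <;> simp [h]
  have h1W (ω : Ω) : |1 - W ω| ≤ 1 := by rcases hWbin ω with h | h <;> simp [h]
  have hWi : Integrable W P := Integrable.of_bound hW.aestronglyMeasurable 1 (ae_of_all _ hW1)
  have h1Wi : Integrable (1 - W) P :=
    Integrable.of_bound (by fun_prop) 1 (ae_of_all _ h1W)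
  let c : Fin 5 → Ω → ℝ := ![α1, β1, α0, β0, 1]
  let U : Fin 5 → Ω → ℝ := ![W, W * Y1, 1 - W, (1 - W) * Y0, ζ]
  have hdecomp : (fun ω => W ω * (α1 ω + β1 ω * Y1 ω) + (1 - W ω) * (α0 ω + β0 ω * Y0 ω) + ζ ω)
      = fun ω => ∑ i, c i ω * U i ω := by
    ext ω
    simp only [Fin.sum_univ_five, c, U, Matrix.cons_val, Pi.mul_apply, Pi.sub_apply,
      Pi.one_apply]
    ring
  have hpull := condExp_finsetSum_mul_of_bound hm Finset.univ (c := c) (U := U) (P := P)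
    (fun i _ => by fin_cases i <;> simp [c, hα0, hβ0, hα1, hβ1, stronglyMeasurable_one])
    (fun i _ => by
      fin_cases i
      exacts [hα1R, hβ1R, hα0R, hβ0R, ⟨1, ae_of_all _ fun ω => by simp [c]⟩])
    (fun i _ => by
      fin_cases i
      exacts [hWi, hY1i.bdd_mul hW.aestronglyMeasurable (ae_of_all _ hW1), h1Wi,
        hY0i.bdd_mul h1Wi.aestronglyMeasurable (ae_of_all _ h1W), hζ])
  have hind1 : CondIndepFun m hm W Y1 P := hind.comp measurable_id measurable_snd
  have hind0 : CondIndepFun m hm W Y0 P := hind.comp measurable_id measurable_fst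
  rw [hdecomp]
  filter_upwards [hpull, hind1.condExp_mul_of_binary hW hWbin hY1 hY1i,
    hind0.condExp_one_sub_mul_of_binary hW hWbin hY0 hY0i, condExp_one_sub hm hWi]
    with ω h h1 h0 h1W
  rw [h]
  simp only [Fin.sum_univ_five, c, U, Matrix.cons_val, Pi.one_apply, h1, h0, h1W, Pi.mul_apply,
    Pi.sub_apply]
  ring

theorem ae_condExp_mem_Icc [IsFiniteMeasure P] {W : Ω → ℝ} (hW : ∀ᵐ ω ∂P, W ω ∈ Icc 0 1) :
    ∀ᵐ ω ∂P, P[W|m] ω ∈ Icc 0 1 := by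
  filter_upwards [condExp_nonneg (m := m) (hW.mono fun _ h => h.1),
    condExp_le_nonneg_const (m := m) zero_le_one (hW.mono fun _ h => h.2)] with ω h0 h1
  exact ⟨h0, h1⟩

end CondIndep

/-- The residual `Ψ(w, y)` without `ξ`, with the reals `e`, `μ0`, `μ1` in place of `e(X)`,
`μ₀(X)`, `μ₁(X)`. -/
noncomputable def gnipwScore (ν1 ν2 θ1 θ2 θ3 θ4 e μ0 μ1 w y : ℝ) : ℝ :=
  e ^ ν1 * (1 - e) ^ ν2 *
    ((θ1 * w + θ2 * e + θ3 * w * e + θ4 * e ^ 2) * (μ1 - μ0) - (w - e) * y)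

section gnipwScore

variable {ν1 ν2 θ1 θ2 θ3 θ4 e μ0 μ1 w y : ℝ}

theorem gnipwScore_eq_add_mul :
    gnipwScore ν1 ν2 θ1 θ2 θ3 θ4 e μ0 μ1 w y =
      gnipwScore ν1 ν2 θ1 θ2 θ3 θ4 e μ0 μ1 w 0 + -(e ^ ν1 * (1 - e) ^ ν2 * (w - e)) * y := by
  unfold gnipwScore; ring

theorem gnipwScore_of_binary {y0 y1 : ℝ} (hw : w = 0 ∨ w = 1) :
    gnipwScore ν1 ν2 θ1 θ2 θ3 θ4 e μ0 μ1 w (w * y1 + (1 - w) * y0) =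
      w * gnipwScore ν1 ν2 θ1 θ2 θ3 θ4 e μ0 μ1 1 y1 +
        (1 - w) * gnipwScore ν1 ν2 θ1 θ2 θ3 θ4 e μ0 μ1 0 y0 := by
  rcases hw with rfl | rfl <;> simp

theorem mul_gnipwScore_add_mul_gnipwScore (hθ12 : θ1 + θ2 = 1) (hθ34 : θ3 + θ4 = -1) :
    e * gnipwScore ν1 ν2 θ1 θ2 θ3 θ4 e μ0 μ1 1 μ1 +
      (1 - e) * gnipwScore ν1 ν2 θ1 θ2 θ3 θ4 e μ0 μ1 0 μ0 = 0 := by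
  unfold gnipwScore
  linear_combination e ^ ν1 * (1 - e) ^ ν2 * (μ1 - μ0) * (e * hθ12 + e ^ 2 * hθ34)

theorem abs_rpow_mul_one_sub_rpow_le_one (hν1 : 0 ≤ ν1) (hν2 : 0 ≤ ν2) (he : e ∈ Icc 0 1) :
    |e ^ ν1 * (1 - e) ^ ν2| ≤ 1 := by
  have he' : 0 ≤ 1 - e := sub_nonneg.2 he.2
  rw [abs_of_nonneg (mul_nonneg (Real.rpow_nonneg he.1 _) (Real.rpow_nonneg he' _))]
  exact mul_le_one₀ (Real.rpow_le_one he.1 he.2 hν1) (Real.rpow_nonneg he' _)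
    (Real.rpow_le_one he' (by linarith [he.1]) hν2)

theorem abs_rpow_mul_one_sub_rpow_mul_sub_le_one (hν1 : 0 ≤ ν1) (hν2 : 0 ≤ ν2)
    (he : e ∈ Icc 0 1) (hw : w ∈ Icc 0 1) : |e ^ ν1 * (1 - e) ^ ν2 * (w - e)| ≤ 1 := by
  rw [abs_mul]
  exact mul_le_one₀ (abs_rpow_mul_one_sub_rpow_le_one hν1 hν2 he) (abs_nonneg _)
    (by simpa [Real.dist_eq] using Real.dist_le_of_mem_Icc_01 hw he)

theorem abs_gnipwScore_le {Cμ Cy : ℝ} (hν1 : 0 ≤ ν1) (hν2 : 0 ≤ ν2) (he : e ∈ Icc 0 1)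
    (hw : w ∈ Icc 0 1) (hμ0 : |μ0| ≤ Cμ) (hμ1 : |μ1| ≤ Cμ) (hy : |y| ≤ Cy) :
    |gnipwScore ν1 ν2 θ1 θ2 θ3 θ4 e μ0 μ1 w y| ≤
      (|θ1| + |θ2| + |θ3| + |θ4|) * (Cμ + Cμ) + Cy := by
  have hunit (θ x : ℝ) (hx : x ∈ Icc 0 1) : |θ * x| ≤ |θ| := by
    rw [abs_mul, abs_of_nonneg hx.1]
    exact mul_le_of_le_one_right (abs_nonneg θ) hx.2
  have hQ : |θ1 * w + θ2 * e + θ3 * w * e + θ4 * e ^ 2| ≤ |θ1| + |θ2| + |θ3| + |θ4| := by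
    have hwe : w * e ∈ Icc 0 1 := ⟨mul_nonneg hw.1 he.1, mul_le_one₀ hw.2 he.1 he.2⟩
    have he2 : e ^ 2 ∈ Icc 0 1 := ⟨by positivity, pow_le_one₀ he.1 he.2⟩
    rw [mul_assoc θ3]
    linarith [abs_add_le (θ1 * w + θ2 * e + θ3 * (w * e)) (θ4 * e ^ 2),
      abs_add_le (θ1 * w + θ2 * e) (θ3 * (w * e)), abs_add_le (θ1 * w) (θ2 * e),
      hunit θ1 w hw, hunit θ2 e he, hunit θ3 _ hwe, hunit θ4 _ he2]
  have hτ : |μ1 - μ0| ≤ Cμ + Cμ := (abs_sub _ _).trans (add_le_add hμ1 hμ0)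
  have hwe : |w - e| ≤ 1 := by simpa [Real.dist_eq] using Real.dist_le_of_mem_Icc_01 hw he
  unfold gnipwScore
  rw [abs_mul]
  refine (mul_le_of_le_one_left (abs_nonneg _)
    (abs_rpow_mul_one_sub_rpow_le_one hν1 hν2 he)).trans ?_
  calc _ ≤ |θ1 * w + θ2 * e + θ3 * w * e + θ4 * e ^ 2| * |μ1 - μ0| + |w - e| * |y| := by
        rw [← abs_mul, ← abs_mul]; exact abs_sub _ _
    _ ≤ (|θ1| + |θ2| + |θ3| + |θ4|) * (Cμ + Cμ) + 1 * Cy := by gcongr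
    _ = _ := by ring

theorem condExp_gnipwScore_add_eq_zero {Ω : Type*} {m mΩ : MeasurableSpace Ω}
    [StandardBorelSpace Ω] (hm : m ≤ mΩ) {P : Measure Ω} [IsFiniteMeasure P]
    {W Y0 Y1 Y ζ : Ω → ℝ} (hW : Measurable W) (hWbin : ∀ ω, W ω = 0 ∨ W ω = 1)
    (hY0 : Measurable Y0) (hY1 : Measurable Y1) {C : ℝ} (hYC : ∀ ω, |Y0 ω| ≤ C ∧ |Y1 ω| ≤ C)
    (hY : ∀ ω, Y ω = W ω * Y1 ω + (1 - W ω) * Y0 ω)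
    (hind : CondIndepFun m hm W (fun ω => (Y0 ω, Y1 ω)) P)
    (hζ : Integrable ζ P) (hζ0 : P[ζ|m] =ᵐ[P] 0)
    (hν1 : 0 ≤ ν1) (hν2 : 0 ≤ ν2) (hθ12 : θ1 + θ2 = 1) (hθ34 : θ3 + θ4 = -1) :
    P[fun ω => gnipwScore ν1 ν2 θ1 θ2 θ3 θ4 (P[W|m] ω) (P[Y0|m] ω) (P[Y1|m] ω) (W ω) (Y ω)
      + ζ ω|m] =ᵐ[P] 0 := by
  set p := P[W|m]
  set a0 := P[Y0|m]
  set a1 := P[Y1|m]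
  have hp : ∀ᵐ ω ∂P, p ω ∈ Icc 0 1 :=
    ae_condExp_mem_Icc (ae_of_all _ fun ω => by rcases hWbin ω with h | h <;> simp [h])
  have ha0 : ∀ᵐ ω ∂P, |a0 ω| ≤ C := ae_bdd_abs_condExp_of_ae_bdd_abs (ae_of_all _ (hYC · |>.1))
  have ha1 : ∀ᵐ ω ∂P, |a1 ω| ≤ C := ae_bdd_abs_condExp_of_ae_bdd_abs (ae_of_all _ (hYC · |>.2))
  have hpm : Measurable[m] p := stronglyMeasurable_condExp.measurable
  have ha0m : Measurable[m] a0 := stronglyMeasurable_condExp.measurable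
  have ha1m : Measurable[m] a1 := stronglyMeasurable_condExp.measurable
  let α (w : ℝ) (ω : Ω) : ℝ := gnipwScore ν1 ν2 θ1 θ2 θ3 θ4 (p ω) (a0 ω) (a1 ω) w 0
  let β (w : ℝ) (ω : Ω) : ℝ := -(p ω ^ ν1 * (1 - p ω) ^ ν2 * (w - p ω))
  have hαm (w : ℝ) : StronglyMeasurable[m] (α w) := by
    unfold α gnipwScore; exact Measurable.stronglyMeasurable (by fun_prop)
  have hβm (w : ℝ) : StronglyMeasurable[m] (β w) := Measurable.stronglyMeasurable (by fun_prop)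
  have hαR (w : ℝ) (hw : w ∈ Icc 0 1) : ∃ R, ∀ᵐ ω ∂P, ‖α w ω‖ ≤ R :=
    ⟨_, by filter_upwards [hp, ha0, ha1] with ω h h0 h1 using
      abs_gnipwScore_le hν1 hν2 h hw h0 h1 abs_zero.le⟩
  have hβR (w : ℝ) (hw : w ∈ Icc 0 1) : ∃ R, ∀ᵐ ω ∂P, ‖β w ω‖ ≤ R :=
    ⟨1, hp.mono fun ω h => by
      rw [norm_neg, Real.norm_eq_abs]
      exact abs_rpow_mul_one_sub_rpow_mul_sub_le_one hν1 hν2 h hw⟩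
  have hYi {V : Ω → ℝ} (hV : Measurable V) (hVC : ∀ ω, |V ω| ≤ C) : Integrable V P :=
    Integrable.of_bound hV.aestronglyMeasurable C (ae_of_all _ hVC)
  have hdecomp : (fun ω => gnipwScore ν1 ν2 θ1 θ2 θ3 θ4 (p ω) (a0 ω) (a1 ω) (W ω) (Y ω) + ζ ω) =
      fun ω => W ω * (α 1 ω + β 1 ω * Y1 ω) + (1 - W ω) * (α 0 ω + β 0 ω * Y0 ω) + ζ ω := by
    ext ω
    rw [hY, gnipwScore_of_binary (hWbin ω), gnipwScore_eq_add_mul (y := Y1 ω),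
      gnipwScore_eq_add_mul (y := Y0 ω)]
  rw [hdecomp]
  filter_upwards [hind.condExp_binary_affine hW hWbin hY0 hY1 (hYi hY0 (hYC · |>.1))
    (hYi hY1 (hYC · |>.2)) hζ (hαm 0) (hβm 0) (hαm 1) (hβm 1) (hαR 0 (by simp)) (hβR 0 (by simp))
    (hαR 1 (by simp)) (hβR 1 (by simp)), hζ0] with ω h hζω
  rw [h, hζω, Pi.zero_apply, add_zero]
  simp only [α, β, ← gnipwScore_eq_add_mul]
  exact mul_gnipwScore_add_mul_gnipwScore hθ12 hθ34

end gnipwScore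

theorem stmt_3_general
    {Ω 𝒳 : Type*} [MeasurableSpace Ω] [StandardBorelSpace Ω] [MeasurableSpace 𝒳]
    (P : Measure Ω) [IsProbabilityMeasure P]
    (X : Ω → 𝒳) (hX : Measurable X)
    (W : Ω → ℝ) (hWm : Measurable W) (hWbin : ∀ ω, W ω = 0 ∨ W ω = 1)
    (Y0 Y1 : Ω → ℝ) (hY0m : Measurable Y0) (hY1m : Measurable Y1)
    (CY : ℝ) (hYbdd : ∀ ω, |Y0 ω| ≤ CY ∧ |Y1 ω| ≤ CY)
    (Y : Ω → ℝ) (hSUTVA : ∀ ω, Y ω = W ω * Y1 ω + (1 - W ω) * Y0 ω)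
    (hUnconf : CondIndepFun (sigmaAlg X) hX.comap_le W (fun ω => (Y0 ω, Y1 ω)) P)
    (e : 𝒳 → ℝ)
    (hprop : P[W|sigmaAlg X] =ᵐ[P] (fun ω => e (X ω)))
    (μ0 μ1 : 𝒳 → ℝ)
    (hμ0c : P[Y0|sigmaAlg X] =ᵐ[P] (fun ω => μ0 (X ω)))
    (hμ1c : P[Y1|sigmaAlg X] =ᵐ[P] (fun ω => μ1 (X ω)))
    (ν1 ν2 : ℝ) (hν1 : 0 ≤ ν1) (hν2 : 0 ≤ ν2)
    (θ1 θ2 θ3 θ4 : ℝ) (hθ12 : θ1 + θ2 = 1) (hθ34 : θ3 + θ4 = -1)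
    (ξ : 𝒳 × ℝ → ℝ) (hξm : Measurable ξ) (Cξ : ℝ) (hξbdd : ∀ q, |ξ q| ≤ Cξ)
    (hξ0 : P[(fun ω => ξ (X ω, W ω))|sigmaAlg X] =ᵐ[P] 0) :
    P[(fun ω => e (X ω) ^ ν1 * (1 - e (X ω)) ^ ν2 * ((θ1 * W ω + θ2 * e (X ω) + θ3 * W ω * e (X ω) + θ4 * e (X ω) ^ 2) * (μ1 (X ω) - μ0 (X ω)) - (W ω - e (X ω)) * Y ω) + ξ (X ω, W ω))|sigmaAlg X] =ᵐ[P] 0 ∧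
    ∃ C : ℝ, ∀ᵐ ω ∂P, (P[(fun ω' => (e (X ω') ^ ν1 * (1 - e (X ω')) ^ ν2 * ((θ1 * W ω' + θ2 * e (X ω') + θ3 * W ω' * e (X ω') + θ4 * e (X ω') ^ 2) * (μ1 (X ω') - μ0 (X ω')) - (W ω' - e (X ω')) * Y ω') + ξ (X ω', W ω')) ^ 2)|sigmaAlg X]) ω ≤ C := by
  have hWI (ω : Ω) : W ω ∈ Icc 0 1 := by rcases hWbin ω with h | h <;> simp [h]
  have hξi : Integrable (fun ω => ξ (X ω, W ω)) P :=
    Integrable.of_bound (hξm.comp (hX.prodMk hWm)).aestronglyMeasurable Cξ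
      (ae_of_all _ fun ω => hξbdd _)
  refine ⟨(condExp_congr_ae ?_).trans (condExp_gnipwScore_add_eq_zero hX.comap_le hWm hWbin
    hY0m hY1m hYbdd hSUTVA hUnconf hξi hξ0 hν1 hν2 hθ12 hθ34), ?_⟩
  · filter_upwards [hprop, hμ0c, hμ1c] with ω h h0 h1
    rw [h, h0, h1]
    rfl
  refine ⟨((|θ1| + |θ2| + |θ3| + |θ4|) * (CY + CY) + CY + Cξ) ^ 2,
    condExp_le_nonneg_const (sq_nonneg _) ?_⟩
  filter_upwards [hprop, hμ0c, hμ1c, ae_condExp_mem_Icc (m := sigmaAlg X) (ae_of_all P hWI),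
    ae_bdd_abs_condExp_of_ae_bdd_abs (m := sigmaAlg X) (ae_of_all P fun ω => (hYbdd ω).1),
    ae_bdd_abs_condExp_of_ae_bdd_abs (m := sigmaAlg X) (ae_of_all P fun ω => (hYbdd ω).2)]
    with ω h h0 h1 hp ha0 ha1
  rw [h] at hp
  rw [h0] at ha0
  rw [h1] at ha1
  have hY : |Y ω| ≤ CY := by rcases hWbin ω with hw | hw <;> simp [hSUTVA, hw, hYbdd]
  have hΨ := (abs_add_le _ _).trans (add_le_add
    (abs_gnipwScore_le (θ1 := θ1) (θ2 := θ2) (θ3 := θ3) (θ4 := θ4) hν1 hν2 hp (hWI ω) ha0 ha1 hY)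
    (hξbdd (X ω, W ω)))
  exact sq_le_sq' (abs_le.1 hΨ).1 (abs_le.1 hΨ).2

theorem stmt_3
    {Ω 𝒳 : Type*} [MeasurableSpace Ω] [StandardBorelSpace Ω] [MeasurableSpace 𝒳]
    (P : Measure Ω) [IsProbabilityMeasure P]
    (X : Ω → 𝒳) (hX : Measurable X)
    (W : Ω → ℝ) (hWm : Measurable W) (hWbin : ∀ ω, W ω = 0 ∨ W ω = 1)
    (Y0 Y1 : Ω → ℝ) (hY0m : Measurable Y0) (hY1m : Measurable Y1)
    (CY : ℝ) (hYbdd : ∀ ω, |Y0 ω| ≤ CY ∧ |Y1 ω| ≤ CY)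
    (Y : Ω → ℝ) (hSUTVA : ∀ ω, Y ω = W ω * Y1 ω + (1 - W ω) * Y0 ω)
    (hUnconf : CondIndepFun (sigmaAlg X) hX.comap_le W (fun ω => (Y0 ω, Y1 ω)) P)
    (e : 𝒳 → ℝ) (hem : Measurable e)
    (hprop : P[W|sigmaAlg X] =ᵐ[P] (fun ω => e (X ω)))
    (hoverlap : ∀ᵐ ω ∂P, 0 < e (X ω) ∧ e (X ω) < 1)
    (μ0 μ1 : 𝒳 → ℝ) (hμ0m : Measurable μ0) (hμ1m : Measurable μ1)
    (Cμ : ℝ) (hμbdd : ∀ x, |μ0 x| ≤ Cμ ∧ |μ1 x| ≤ Cμ)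
    (hμ0c : P[Y0|sigmaAlg X] =ᵐ[P] (fun ω => μ0 (X ω)))
    (hμ1c : P[Y1|sigmaAlg X] =ᵐ[P] (fun ω => μ1 (X ω)))
    (ν1 ν2 : ℝ) (hν1 : 0 ≤ ν1) (hν2 : 0 ≤ ν2)
    (θ1 θ2 θ3 θ4 : ℝ) (hθ12 : θ1 + θ2 = 1) (hθ34 : θ3 + θ4 = -1)
    (ξ : 𝒳 × ℝ → ℝ) (hξm : Measurable ξ) (Cξ : ℝ) (hξbdd : ∀ q, |ξ q| ≤ Cξ)
    (hξ0 : P[(fun ω => ξ (X ω, W ω))|sigmaAlg X] =ᵐ[P] 0) :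
    P[(fun ω => e (X ω) ^ ν1 * (1 - e (X ω)) ^ ν2 * ((θ1 * W ω + θ2 * e (X ω) + θ3 * W ω * e (X ω) + θ4 * e (X ω) ^ 2) * (μ1 (X ω) - μ0 (X ω)) - (W ω - e (X ω)) * Y ω) + ξ (X ω, W ω))|sigmaAlg X] =ᵐ[P] 0 ∧
    ∃ C : ℝ, ∀ᵐ ω ∂P, (P[(fun ω' => (e (X ω') ^ ν1 * (1 - e (X ω')) ^ ν2 * ((θ1 * W ω' + θ2 * e (X ω') + θ3 * W ω' * e (X ω') + θ4 * e (X ω') ^ 2) * (μ1 (X ω') - μ0 (X ω')) - (W ω' - e (X ω')) * Y ω') + ξ (X ω', W ω')) ^ 2)|sigmaAlg X]) ω ≤ C :=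
  stmt_3_general P X hX W hWm hWbin Y0 Y1 hY0m hY1m CY hYbdd Y hSUTVA hUnconf e hprop μ0 μ1 hμ0c
    hμ1c ν1 ν2 hν1 hν2 θ1 θ2 θ3 θ4 hθ12 hθ34 ξ hξm Cξ hξbdd hξ0
end

section
/- Suppose one-sided limited overlap holds: 0 < e(X) < 1 − p* < 1 a.s. for some p* ∈ (0,1). Then the generalized residual Ψ = W·τ(X) − (W−e(X))(Y−μ0(X))/(1−e(X)) satisfies E[Ψ | σ(X)] = 0 a.s. with a.s. finite conditional variance, and it is Neyman orthogonal: for all bounded measurable directions h_e, h_η on 𝒳 such that 1 − e(X) − t·h_e(X) stays bounded away from 0 for all t in a neighborhood of 0, for almost every ω the function t ↦ E[W·τ(X) − (W−e(X)−t·h_e(X))(Y−μ0(X)−t·h_η(X))/(1−e(X)−t·h_e(X)) | σ(X)](ω) has derivative 0 at t = 0. Symmetrically, if 0 < p* < e(X) < 1 a.s., then Ψ = (1−W)·τ(X) − (W−e(X))(Y−μ1(X))/e(X) has the same two properties (with perturbations e+t·h_e, μ1+t·h_η). -/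
open MeasureTheory ProbabilityTheory Filter Set

/-!
Conditionally on σ(X), SUTVA and unconfoundedness pin down the first moments
`E[W] = e`, `E[W Y] = e μ₁` and `E[Y] = e μ₁ + (1 - e) μ₀`. Plugging arbitrary nuisances
`(e', η)` (functions of `X`) into the generalized residual, its conditional mean is therefore a
product of nuisance errors: `(e - e') (η - μ₀) / (1 - e')`, resp. `(e - e') (η - μ₁) / e'`.
It vanishes at the true nuisances, and along the perturbation `(e + t hₑ, μ + t h_η)` it is
`O(t²)`, hence has derivative `0` at `t = 0`. Under one-sided overlap the residual is bounded,
and so is its conditional second moment.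
-/

open scoped ENNReal Topology

section

variable {Ω β γ : Type*} {m mΩ : MeasurableSpace Ω} {μ : Measure Ω}

theorem ProbabilityTheory.CondIndepFun.ae_indepFun_condExpKernel [StandardBorelSpace Ω]
    [IsFiniteMeasure μ] {mβ : MeasurableSpace β} {mγ : MeasurableSpace γ}
    [MeasurableSpace.CountablyGenerated β] [MeasurableSpace.CountablyGenerated γ]
    {hm : m ≤ mΩ} {f : Ω → β} {g : Ω → γ} (hf : Measurable f) (hg : Measurable g)
    (h : CondIndepFun m hm f g μ) :
    ∀ᵐ ω ∂μ, f ⟂ᵢ[condExpKernel μ m ω] g := by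
  filter_upwards [ae_of_ae_trim hm ((condIndepFun_iff_map_prod_eq_prod_map_map hf hg).1 h)]
    with ω hω
  rw [indepFun_iff_map_prod_eq_prod_map_map hf.aemeasurable hg.aemeasurable]
  simpa [Kernel.map_apply _ hf, Kernel.map_apply _ hg, Kernel.map_apply _ (hf.prodMk hg),
    Kernel.prod_apply] using hω

theorem ProbabilityTheory.CondIndepFun.condExp_mul [StandardBorelSpace Ω] [IsFiniteMeasure μ]
    {hm : m ≤ mΩ} {f g : Ω → ℝ} (hf : Measurable f) (hg : Measurable g)
    (hfi : Integrable f μ) (hgi : Integrable g μ) (hfgi : Integrable (f * g) μ)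
    (h : CondIndepFun m hm f g μ) :
    μ[f * g|m] =ᵐ[μ] μ[f|m] * μ[g|m] := by
  filter_upwards [h.ae_indepFun_condExpKernel hf hg, condExp_ae_eq_integral_condExpKernel hm hfgi,
    condExp_ae_eq_integral_condExpKernel hm hfi, condExp_ae_eq_integral_condExpKernel hm hgi]
    with ω hω hfg hf' hg'
  rw [hfg, Pi.mul_apply, hf', hg']
  exact hω.integral_fun_mul_eq_mul_integral hf.aestronglyMeasurable hg.aestronglyMeasurable

theorem condExp_sub_mul_sub [IsFiniteMeasure μ] (hm : m ≤ mΩ) {U V a b : Ω → ℝ}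
    (hU : Integrable U μ) (hV : Integrable V μ) (hUV : Integrable (U * V) μ)
    (ha : StronglyMeasurable[m] a) (hb : StronglyMeasurable[m] b)
    (ha' : MemLp a ∞ μ) (hb' : MemLp b ∞ μ) :
    μ[(U - a) * (V - b)|m] =ᵐ[μ] μ[U * V|m] - a * μ[V|m] - b * μ[U|m] + a * b := by
  have haV : Integrable (a * V) μ := hV.mul_of_top_right ha'
  have hbU : Integrable (b * U) μ := hU.mul_of_top_right hb'
  have hab : Integrable (a * b) μ := (hb'.integrable le_top).mul_of_top_right ha'
  rw [show (U - a) * (V - b) = U * V - a * V - b * U + a * b by ring]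
  filter_upwards [condExp_add ((hUV.sub haV).sub hbU) hab m, condExp_sub (hUV.sub haV) hbU m,
    condExp_sub hUV haV m, condExp_mul_of_stronglyMeasurable_left ha haV hV,
    condExp_mul_of_stronglyMeasurable_left hb hbU hU] with ω h1 h2 h3 h4 h5
  simp only [Pi.add_apply, Pi.sub_apply, Pi.mul_apply] at *
  rw [h1, h2, h3, h4, h5, condExp_of_stronglyMeasurable hm (ha.mul hb) hab, Pi.mul_apply]

theorem memLp_top_inv_of_le {f : Ω → ℝ} (hf : AEStronglyMeasurable f μ) {c : ℝ} (hc : 0 < c)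
    (hfc : ∀ᵐ ω ∂μ, c ≤ f ω) : MemLp (fun ω => (f ω)⁻¹) ∞ μ :=
  memLp_top_of_bound hf.aemeasurable.inv.aestronglyMeasurable c⁻¹ <| by
    filter_upwards [hfc] with ω hω
    rw [norm_inv, Real.norm_eq_abs, abs_of_pos (hc.trans_le hω)]
    exact inv_anti₀ hc hω

theorem MeasureTheory.MemLp.exists_ae_condExp_sq_le [IsFiniteMeasure μ] {f : Ω → ℝ}
    (hf : MemLp f ∞ μ) : ∃ C, ∀ᵐ ω ∂μ, μ[fun ω' => f ω' ^ 2|m] ω ≤ C := by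
  have hf2 : MemLp (μ[fun ω => f ω ^ 2|m]) ∞ μ := by
    simpa only [sq] using (hf.mul' hf).condExp le_top
  obtain ⟨C, hC⟩ :=
    eLpNormEssSup_lt_top_iff_isBoundedUnder.1 (by simpa using hf2.eLpNorm_lt_top)
  exact ⟨C, (eventually_map.1 hC).mono fun ω hω =>
    (le_abs_self _).trans (by exact_mod_cast hω)⟩

theorem HasDerivAt.mul_div_of_apply_eq_zero {𝕜 : Type*} [NontriviallyNormedField 𝕜]
    {f g D : 𝕜 → 𝕜} {f' g' D' x : 𝕜} (hf : HasDerivAt f f' x) (hg : HasDerivAt g g' x)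
    (hD : HasDerivAt D D' x) (hfx : f x = 0) (hgx : g x = 0) (hDx : D x ≠ 0) :
    HasDerivAt (fun t => f t * g t / D t) 0 x :=
  ((hf.mul hg).div hD hDx).congr_deriv (by simp [hfx, hgx])

/-- Each `F t` matters only up to a `t`-dependent null set, so differentiability in `t` can only
be asked of a modification of the family. -/
theorem exists_modification_ae_hasDerivAt {F G : ℝ → Ω → ℝ} {G' : Ω → ℝ} {t₀ : ℝ}
    (hFG : ∀ᶠ t in 𝓝 t₀, F t =ᵐ[μ] G t)
    (hG : ∀ᵐ ω ∂μ, HasDerivAt (fun t => G t ω) (G' ω) t₀) :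
    ∃ g : ℝ → Ω → ℝ,
      (∀ t, g t =ᵐ[μ] F t) ∧ ∀ᵐ ω ∂μ, HasDerivAt (fun t => g t ω) (G' ω) t₀ := by
  classical
  obtain ⟨s, hs, hsFG⟩ := hFG.exists_mem
  refine ⟨fun t => if t ∈ s then G t else F t, fun t => ?_, ?_⟩
  · by_cases ht : t ∈ s
    · simpa [ht] using (hsFG t ht).symm
    · simp [ht]
  · filter_upwards [hG] with ω hω
    exact hω.congr_of_eventuallyEq (mem_of_superset hs fun t ht => by simp [ht])

/-- What SUTVA and unconfoundedness yield about the conditional moments of `W` and `Y` given `m`. -/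
structure PotentialOutcomeMoments (m : MeasurableSpace Ω) {mΩ : MeasurableSpace Ω}
    (μ : Measure Ω) (W Y e μ0 μ1 : Ω → ℝ) : Prop where
  memLp_treatment : MemLp W ∞ μ
  memLp_outcome : MemLp Y ∞ μ
  stronglyMeasurable_μ0 : StronglyMeasurable[m] μ0
  stronglyMeasurable_μ1 : StronglyMeasurable[m] μ1
  memLp_μ0 : MemLp μ0 ∞ μ
  memLp_μ1 : MemLp μ1 ∞ μ
  condExp_treatment : μ[W|m] =ᵐ[μ] e
  condExp_treatment_mul_outcome : μ[W * Y|m] =ᵐ[μ] e * μ1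
  condExp_outcome : μ[Y|m] =ᵐ[μ] e * μ1 + (1 - e) * μ0

theorem PotentialOutcomeMoments.of_condIndepFun [StandardBorelSpace Ω] [IsFiniteMeasure μ]
    (hm : m ≤ mΩ) {W Y0 Y1 Y e μ0 μ1 : Ω → ℝ} (hW : Measurable W)
    (hWbin : ∀ ω, W ω = 0 ∨ W ω = 1) (hY0 : Measurable Y0) (hY1 : Measurable Y1)
    (hY0b : MemLp Y0 ∞ μ) (hY1b : MemLp Y1 ∞ μ)
    (hY : ∀ ω, Y ω = W ω * Y1 ω + (1 - W ω) * Y0 ω)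
    (hind : CondIndepFun m hm W (fun ω => (Y0 ω, Y1 ω)) μ)
    (he : μ[W|m] =ᵐ[μ] e) (hμ0 : μ[Y0|m] =ᵐ[μ] μ0) (hμ1 : μ[Y1|m] =ᵐ[μ] μ1)
    (hμ0m : StronglyMeasurable[m] μ0) (hμ1m : StronglyMeasurable[m] μ1) :
    PotentialOutcomeMoments m μ W Y e μ0 μ1 := by
  have hWb : MemLp W ∞ μ := memLp_top_of_bound hW.aestronglyMeasurable 1
    (.of_forall fun ω => by rcases hWbin ω with h | h <;> simp [h])
  have hWY : W * Y = W * Y1 := funext fun ω => by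
    rcases hWbin ω with h | h <;> simp [hY ω, h]
  have hYeq : Y = W * Y1 + (Y0 - W * Y0) := funext fun ω => by simp [hY ω]; ring
  have hWY1 : Integrable (W * Y1) μ := (hY1b.integrable le_top).mul_of_top_right hWb
  have hWY0 : Integrable (W * Y0) μ := (hY0b.integrable le_top).mul_of_top_right hWb
  have hW1 : μ[W * Y1|m] =ᵐ[μ] e * μ1 :=
    ((hind.comp measurable_id measurable_snd).condExp_mul hW hY1 (hWb.integrable le_top)
      (hY1b.integrable le_top) hWY1).trans (he.mul hμ1)
  have hW0 : μ[W * Y0|m] =ᵐ[μ] e * μ0 :=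
    ((hind.comp measurable_id measurable_fst).condExp_mul hW hY0 (hWb.integrable le_top)
      (hY0b.integrable le_top) hWY0).trans (he.mul hμ0)
  refine ⟨hWb, ?_, hμ0m, hμ1m, (hY0b.condExp le_top).ae_eq hμ0,
    (hY1b.condExp le_top).ae_eq hμ1, he, hWY ▸ hW1, ?_⟩
  · rw [hYeq]
    exact (hY1b.mul hWb).add (hY0b.sub (hY0b.mul hWb))
  · rw [hYeq]
    filter_upwards [condExp_add hWY1 ((hY0b.integrable le_top).sub hWY0) m,
      condExp_sub (hY0b.integrable le_top) hWY0 m, hW1, hW0, hμ0] with ω h1 h2 h3 h4 h5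
    simp only [Pi.add_apply, Pi.sub_apply, Pi.mul_apply, Pi.one_apply] at *
    rw [h1, h2, h3, h4, h5]; ring

/-- The generalized residual `Ψ` of the one-sided overlap regime `e < 1 - p*` (`att`) and
`p* < e` (`atc`), evaluated at a CATE `τ` and nuisances `(e, η)`. -/
noncomputable def attResidual (W Y τ e η : Ω → ℝ) (ω : Ω) : ℝ :=
  W ω * τ ω - (W ω - e ω) * (Y ω - η ω) / (1 - e ω)

noncomputable def atcResidual (W Y τ e η : Ω → ℝ) (ω : Ω) : ℝ :=
  (1 - W ω) * τ ω - (W ω - e ω) * (Y ω - η ω) / e ω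

theorem attResidual_eq (W Y τ e η : Ω → ℝ) :
    attResidual W Y τ e η = W * τ - (fun ω => (1 - e ω)⁻¹) * ((W - e) * (Y - η)) := by
  ext ω
  simp only [attResidual, Pi.sub_apply, Pi.mul_apply]
  ring

theorem atcResidual_eq (W Y τ e η : Ω → ℝ) :
    atcResidual W Y τ e η = τ - W * τ - (fun ω => (e ω)⁻¹) * ((W - e) * (Y - η)) := by
  ext ω
  simp only [atcResidual, Pi.sub_apply, Pi.mul_apply]
  ring

section Residual

variable {W Y τ e η : Ω → ℝ} {c : ℝ}

theorem memLp_attResidual (hW : MemLp W ∞ μ) (hY : MemLp Y ∞ μ) (hτ : MemLp τ ∞ μ)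
    (he : MemLp e ∞ μ) (hη : MemLp η ∞ μ) (hc : 0 < c)
    (hec : ∀ᵐ ω ∂μ, c ≤ 1 - e ω) :
    MemLp (attResidual W Y τ e η) ∞ μ := by
  rw [attResidual_eq]
  exact (hτ.mul (r := ∞) hW).sub (((hY.sub hη).mul (r := ∞) (hW.sub he)).mul (r := ∞)
    (memLp_top_inv_of_le (aestronglyMeasurable_const.sub he.1) hc hec))

theorem memLp_atcResidual (hW : MemLp W ∞ μ) (hY : MemLp Y ∞ μ) (hτ : MemLp τ ∞ μ)
    (he : MemLp e ∞ μ) (hη : MemLp η ∞ μ) (hc : 0 < c) (hec : ∀ᵐ ω ∂μ, c ≤ e ω) :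
    MemLp (atcResidual W Y τ e η) ∞ μ := by
  rw [atcResidual_eq]
  exact (hτ.sub (hτ.mul (r := ∞) hW)).sub
    (((hY.sub hη).mul (r := ∞) (hW.sub he)).mul (r := ∞) (memLp_top_inv_of_le he.1 hc hec))

end Residual

namespace PotentialOutcomeMoments

variable {W Y e μ0 μ1 e' η u v : Ω → ℝ} {δ c : ℝ}

theorem memLp_propensity (hM : PotentialOutcomeMoments m μ W Y e μ0 μ1) : MemLp e ∞ μ :=
  (hM.memLp_treatment.condExp le_top).ae_eq hM.condExp_treatment

theorem condExp_treatment_sub_mul_outcome_sub [IsFiniteMeasure μ] (hm : m ≤ mΩ)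
    (hM : PotentialOutcomeMoments m μ W Y e μ0 μ1) (he' : StronglyMeasurable[m] e')
    (hη : StronglyMeasurable[m] η) (he'b : MemLp e' ∞ μ) (hηb : MemLp η ∞ μ) :
    μ[(W - e') * (Y - η)|m] =ᵐ[μ]
      e * μ1 - e' * (e * μ1 + (1 - e) * μ0) - η * e + e' * η := by
  have hY := hM.memLp_outcome.integrable le_top
  filter_upwards [condExp_sub_mul_sub hm (hM.memLp_treatment.integrable le_top) hY
    (hY.mul_of_top_right hM.memLp_treatment) he' hη he'b hηb, hM.condExp_treatment,
    hM.condExp_treatment_mul_outcome, hM.condExp_outcome] with ω h1 h2 h3 h4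
  simp only [Pi.add_apply, Pi.sub_apply, Pi.mul_apply, Pi.one_apply] at *
  rw [h1, h2, h3, h4]

theorem condExp_attResidual [IsFiniteMeasure μ] (hm : m ≤ mΩ)
    (hM : PotentialOutcomeMoments m μ W Y e μ0 μ1) (he' : StronglyMeasurable[m] e')
    (hη : StronglyMeasurable[m] η) (he'b : MemLp e' ∞ μ) (hηb : MemLp η ∞ μ) (hc : 0 < c)
    (he'c : ∀ᵐ ω ∂μ, c ≤ 1 - e' ω) :
    μ[attResidual W Y (μ1 - μ0) e' η|m] =ᵐ[μ]
      fun ω => (e ω - e' ω) * (η ω - μ0 ω) / (1 - e' ω) := by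
  have hq : StronglyMeasurable[m] fun ω => (1 - e' ω)⁻¹ :=
    (measurable_const.sub he'.measurable).inv.stronglyMeasurable
  have hqb := memLp_top_inv_of_le (aestronglyMeasurable_const.sub he'b.1) hc he'c
  have hτ := hM.stronglyMeasurable_μ1.sub hM.stronglyMeasurable_μ0
  have hW := hM.memLp_treatment.integrable le_top
  have hWτ := hW.mul_of_top_left (hM.memLp_μ1.sub hM.memLp_μ0)
  have hZ : Integrable ((W - e') * (Y - η)) μ :=
    ((hM.memLp_outcome.sub hηb).mul (r := ∞) (hM.memLp_treatment.sub he'b)).integrable le_top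
  rw [attResidual_eq]
  filter_upwards [condExp_sub hWτ (hZ.mul_of_top_right hqb) m,
    condExp_mul_of_stronglyMeasurable_right hτ hWτ hW,
    condExp_mul_of_stronglyMeasurable_left hq (hZ.mul_of_top_right hqb) hZ,
    hM.condExp_treatment_sub_mul_outcome_sub hm he' hη he'b hηb, hM.condExp_treatment, he'c]
    with ω h1 h2 h3 h4 h5 h6
  simp only [Pi.add_apply, Pi.sub_apply, Pi.mul_apply, Pi.one_apply] at *
  have : 1 - e' ω ≠ 0 := (hc.trans_le h6).ne'
  rw [h1, h2, h3, h4, h5]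
  field_simp
  ring

theorem condExp_atcResidual [IsFiniteMeasure μ] (hm : m ≤ mΩ)
    (hM : PotentialOutcomeMoments m μ W Y e μ0 μ1) (he' : StronglyMeasurable[m] e')
    (hη : StronglyMeasurable[m] η) (he'b : MemLp e' ∞ μ) (hηb : MemLp η ∞ μ) (hc : 0 < c)
    (he'c : ∀ᵐ ω ∂μ, c ≤ e' ω) :
    μ[atcResidual W Y (μ1 - μ0) e' η|m] =ᵐ[μ]
      fun ω => (e ω - e' ω) * (η ω - μ1 ω) / e' ω := by
  have hq : StronglyMeasurable[m] fun ω => (e' ω)⁻¹ := he'.measurable.inv.stronglyMeasurable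
  have hqb := memLp_top_inv_of_le he'b.1 hc he'c
  have hτ := hM.stronglyMeasurable_μ1.sub hM.stronglyMeasurable_μ0
  have hτb := hM.memLp_μ1.sub hM.memLp_μ0
  have hW := hM.memLp_treatment.integrable le_top
  have hWτ := hW.mul_of_top_left hτb
  have hZ : Integrable ((W - e') * (Y - η)) μ :=
    ((hM.memLp_outcome.sub hηb).mul (r := ∞) (hM.memLp_treatment.sub he'b)).integrable le_top
  rw [atcResidual_eq]
  filter_upwards [condExp_sub ((hτb.integrable le_top).sub hWτ) (hZ.mul_of_top_right hqb) m,
    condExp_sub (hτb.integrable le_top) hWτ m,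
    condExp_mul_of_stronglyMeasurable_right hτ hWτ hW,
    condExp_mul_of_stronglyMeasurable_left hq (hZ.mul_of_top_right hqb) hZ,
    hM.condExp_treatment_sub_mul_outcome_sub hm he' hη he'b hηb, hM.condExp_treatment, he'c]
    with ω h1 h2 h3 h4 h5 h6 h7
  rw [condExp_of_stronglyMeasurable hm hτ (hτb.integrable le_top)] at h2
  simp only [Pi.add_apply, Pi.sub_apply, Pi.mul_apply, Pi.one_apply] at *
  have : e' ω ≠ 0 := (hc.trans_le h7).ne'
  rw [h1, h2, h3, h4, h5, h6]
  field_simp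
  ring

theorem exists_modification_hasDerivAt_condExp_attResidual [IsFiniteMeasure μ] (hm : m ≤ mΩ)
    (hM : PotentialOutcomeMoments m μ W Y e μ0 μ1) (he : StronglyMeasurable[m] e)
    (hu : StronglyMeasurable[m] u) (hv : StronglyMeasurable[m] v) (hub : MemLp u ∞ μ)
    (hvb : MemLp v ∞ μ) (hδ : 0 < δ) (hc : 0 < c)
    (hbound : ∀ t : ℝ, |t| < δ → ∀ᵐ ω ∂μ, c ≤ 1 - e ω - t * u ω) :
    ∃ g : ℝ → Ω → ℝ,
      (∀ t : ℝ, g t =ᵐ[μ] μ[attResidual W Y (μ1 - μ0) (fun ω => e ω + t * u ω)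
        (fun ω => μ0 ω + t * v ω)|m]) ∧
      ∀ᵐ ω ∂μ, HasDerivAt (fun t => g t ω) 0 0 := by
  refine exists_modification_ae_hasDerivAt (G := fun t ω =>
    (e ω - (e ω + t * u ω)) * (μ0 ω + t * v ω - μ0 ω) / (1 - (e ω + t * u ω))) ?_ ?_
  · filter_upwards [Metric.ball_mem_nhds 0 hδ] with t ht
    have ht : |t| < δ := by simpa using ht
    exact hM.condExp_attResidual hm (he.add (stronglyMeasurable_const.mul hu))
      (hM.stronglyMeasurable_μ0.add (stronglyMeasurable_const.mul hv))
      (hM.memLp_propensity.add (hub.const_mul t)) (hM.memLp_μ0.add (hvb.const_mul t)) hc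
      (by filter_upwards [hbound t ht] with ω hω; linarith)
  · filter_upwards [hbound 0 (by simpa using hδ)] with ω hω
    have he' := ((hasDerivAt_id' (0 : ℝ)).mul_const (u ω)).const_add (e ω)
    have hμ' := ((hasDerivAt_id' (0 : ℝ)).mul_const (v ω)).const_add (μ0 ω)
    exact (he'.const_sub (e ω)).mul_div_of_apply_eq_zero (hμ'.sub_const (μ0 ω))
      (he'.const_sub 1) (by simp) (by simp) (by simp only [zero_mul, add_zero]; linarith)

theorem exists_modification_hasDerivAt_condExp_atcResidual [IsFiniteMeasure μ] (hm : m ≤ mΩ)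
    (hM : PotentialOutcomeMoments m μ W Y e μ0 μ1) (he : StronglyMeasurable[m] e)
    (hu : StronglyMeasurable[m] u) (hv : StronglyMeasurable[m] v) (hub : MemLp u ∞ μ)
    (hvb : MemLp v ∞ μ) (hδ : 0 < δ) (hc : 0 < c)
    (hbound : ∀ t : ℝ, |t| < δ → ∀ᵐ ω ∂μ, c ≤ e ω + t * u ω) :
    ∃ g : ℝ → Ω → ℝ,
      (∀ t : ℝ, g t =ᵐ[μ] μ[atcResidual W Y (μ1 - μ0) (fun ω => e ω + t * u ω)
        (fun ω => μ1 ω + t * v ω)|m]) ∧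
      ∀ᵐ ω ∂μ, HasDerivAt (fun t => g t ω) 0 0 := by
  refine exists_modification_ae_hasDerivAt (G := fun t ω =>
    (e ω - (e ω + t * u ω)) * (μ1 ω + t * v ω - μ1 ω) / (e ω + t * u ω)) ?_ ?_
  · filter_upwards [Metric.ball_mem_nhds 0 hδ] with t ht
    have ht : |t| < δ := by simpa using ht
    exact hM.condExp_atcResidual hm (he.add (stronglyMeasurable_const.mul hu))
      (hM.stronglyMeasurable_μ1.add (stronglyMeasurable_const.mul hv))
      (hM.memLp_propensity.add (hub.const_mul t)) (hM.memLp_μ1.add (hvb.const_mul t)) hc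
      (hbound t ht)
  · filter_upwards [hbound 0 (by simpa using hδ)] with ω hω
    have he' := ((hasDerivAt_id' (0 : ℝ)).mul_const (u ω)).const_add (e ω)
    have hμ' := ((hasDerivAt_id' (0 : ℝ)).mul_const (v ω)).const_add (μ1 ω)
    exact (he'.const_sub (e ω)).mul_div_of_apply_eq_zero (hμ'.sub_const (μ1 ω)) he'
      (by simp) (by simp) (by simp only [zero_mul, add_zero] at hω ⊢; linarith)

end PotentialOutcomeMoments

end

theorem stmt_4_general
    {Ω 𝒳 : Type*} [MeasurableSpace Ω] [StandardBorelSpace Ω] [MeasurableSpace 𝒳]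
    (P : Measure Ω) [IsProbabilityMeasure P]
    (X : Ω → 𝒳) (hX : Measurable X)
    (W : Ω → ℝ) (hWm : Measurable W) (hWbin : ∀ ω, W ω = 0 ∨ W ω = 1)
    (Y0 Y1 : Ω → ℝ) (hY0m : Measurable Y0) (hY1m : Measurable Y1)
    (CY : ℝ) (hYbdd : ∀ ω, |Y0 ω| ≤ CY ∧ |Y1 ω| ≤ CY)
    (Y : Ω → ℝ) (hSUTVA : ∀ ω, Y ω = W ω * Y1 ω + (1 - W ω) * Y0 ω)
    (hUnconf : CondIndepFun (sigmaAlg X) hX.comap_le W (fun ω => (Y0 ω, Y1 ω)) P)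
    (e : 𝒳 → ℝ) (hem : Measurable e)
    (hprop : P[W|sigmaAlg X] =ᵐ[P] (fun ω => e (X ω)))
    (μ0 μ1 : 𝒳 → ℝ) (hμ0m : Measurable μ0) (hμ1m : Measurable μ1)
    (hμ0c : P[Y0|sigmaAlg X] =ᵐ[P] (fun ω => μ0 (X ω)))
    (hμ1c : P[Y1|sigmaAlg X] =ᵐ[P] (fun ω => μ1 (X ω))) :
    (∀ pstar : ℝ, pstar ∈ Set.Ioo (0:ℝ) 1 → (∀ᵐ ω ∂P, e (X ω) < 1 - pstar) →
      (P[(fun ω => W ω * (μ1 (X ω) - μ0 (X ω)) - (W ω - e (X ω)) * (Y ω - μ0 (X ω)) / (1 - e (X ω)))|sigmaAlg X] =ᵐ[P] 0 ∧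
       (∃ C : ℝ, ∀ᵐ ω ∂P,
          (P[(fun ω' => (W ω' * (μ1 (X ω') - μ0 (X ω')) - (W ω' - e (X ω')) * (Y ω' - μ0 (X ω')) / (1 - e (X ω'))) ^ 2)|sigmaAlg X]) ω ≤ C) ∧
       (∀ he hη : 𝒳 → ℝ, Measurable he → Measurable hη →
          (∃ C : ℝ, ∀ x, |he x| ≤ C) → (∃ C : ℝ, ∀ x, |hη x| ≤ C) →
          (∃ δ > (0:ℝ), ∃ c > (0:ℝ), ∀ t : ℝ, |t| < δ →
            ∀ᵐ ω ∂P, c ≤ 1 - e (X ω) - t * he (X ω)) →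
          ∃ g : ℝ → Ω → ℝ,
            (∀ t : ℝ, g t =ᵐ[P] P[(fun ω => W ω * (μ1 (X ω) - μ0 (X ω)) - (W ω - (e (X ω) + t * he (X ω))) * (Y ω - (μ0 (X ω) + t * hη (X ω))) / (1 - (e (X ω) + t * he (X ω))))|sigmaAlg X]) ∧
            (∀ᵐ ω ∂P, HasDerivAt (fun t => g t ω) 0 0)))) ∧
    (∀ pstar : ℝ, pstar ∈ Set.Ioo (0:ℝ) 1 → (∀ᵐ ω ∂P, pstar < e (X ω)) →
      (P[(fun ω => (1 - W ω) * (μ1 (X ω) - μ0 (X ω)) - (W ω - e (X ω)) * (Y ω - μ1 (X ω)) / e (X ω))|sigmaAlg X] =ᵐ[P] 0 ∧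
       (∃ C : ℝ, ∀ᵐ ω ∂P,
          (P[(fun ω' => ((1 - W ω') * (μ1 (X ω') - μ0 (X ω')) - (W ω' - e (X ω')) * (Y ω' - μ1 (X ω')) / e (X ω')) ^ 2)|sigmaAlg X]) ω ≤ C) ∧
       (∀ he hη : 𝒳 → ℝ, Measurable he → Measurable hη →
          (∃ C : ℝ, ∀ x, |he x| ≤ C) → (∃ C : ℝ, ∀ x, |hη x| ≤ C) →
          (∃ δ > (0:ℝ), ∃ c > (0:ℝ), ∀ t : ℝ, |t| < δ →
            ∀ᵐ ω ∂P, c ≤ e (X ω) + t * he (X ω)) →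
          ∃ g : ℝ → Ω → ℝ,
            (∀ t : ℝ, g t =ᵐ[P] P[(fun ω => (1 - W ω) * (μ1 (X ω) - μ0 (X ω)) - (W ω - (e (X ω) + t * he (X ω))) * (Y ω - (μ1 (X ω) + t * hη (X ω))) / (e (X ω) + t * he (X ω)))|sigmaAlg X]) ∧
            (∀ᵐ ω ∂P, HasDerivAt (fun t => g t ω) 0 0)))) := by
  have hm : sigmaAlg X ≤ ‹MeasurableSpace Ω› := hX.comap_le
  have hXm : Measurable[sigmaAlg X] X := comap_measurable X
  have hmeas {f : 𝒳 → ℝ} (hf : Measurable f) :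
      StronglyMeasurable[sigmaAlg X] (fun ω => f (X ω)) :=
    (hf.comp hXm).stronglyMeasurable
  have hbdd {f : 𝒳 → ℝ} (hf : Measurable f) : (∃ C, ∀ x, |f x| ≤ C) →
      MemLp (fun ω => f (X ω)) ∞ P := fun ⟨C, hC⟩ =>
    memLp_top_of_bound (hf.comp hX).aestronglyMeasurable C (.of_forall fun ω => hC (X ω))
  have hM : PotentialOutcomeMoments (sigmaAlg X) P W Y (fun ω => e (X ω)) (fun ω => μ0 (X ω))
      (fun ω => μ1 (X ω)) :=
    .of_condIndepFun hm hWm hWbin hY0m hY1m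
      (memLp_top_of_bound hY0m.aestronglyMeasurable CY (.of_forall fun ω => (hYbdd ω).1))
      (memLp_top_of_bound hY1m.aestronglyMeasurable CY (.of_forall fun ω => (hYbdd ω).2))
      hSUTVA hUnconf hprop hμ0c hμ1c (hmeas hμ0m) (hmeas hμ1m)
  have hτ := hM.memLp_μ1.sub hM.memLp_μ0
  refine ⟨fun pstar hpstar hlt => ?_, fun pstar hpstar hlt => ?_⟩
  · have hpos : ∀ᵐ ω ∂P, pstar ≤ 1 - e (X ω) := hlt.mono fun ω h => by linarith
    refine ⟨?_, ?_, fun u v hu hv hub hvb ⟨δ, hδ, c, hc, hbound⟩ => ?_⟩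
    · exact (hM.condExp_attResidual hm (hmeas hem) (hmeas hμ0m) hM.memLp_propensity
        hM.memLp_μ0 hpstar.1 hpos).trans (.of_forall fun ω => by simp)
    · exact (memLp_attResidual hM.memLp_treatment hM.memLp_outcome hτ hM.memLp_propensity
        hM.memLp_μ0 hpstar.1 hpos).exists_ae_condExp_sq_le
    · exact hM.exists_modification_hasDerivAt_condExp_attResidual hm (hmeas hem) (hmeas hu)
        (hmeas hv) (hbdd hu hub) (hbdd hv hvb) hδ hc hbound
  · have hpos : ∀ᵐ ω ∂P, pstar ≤ e (X ω) := hlt.mono fun ω h => h.le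
    refine ⟨?_, ?_, fun u v hu hv hub hvb ⟨δ, hδ, c, hc, hbound⟩ => ?_⟩
    · exact (hM.condExp_atcResidual hm (hmeas hem) (hmeas hμ1m) hM.memLp_propensity
        hM.memLp_μ1 hpstar.1 hpos).trans (.of_forall fun ω => by simp)
    · exact (memLp_atcResidual hM.memLp_treatment hM.memLp_outcome hτ hM.memLp_propensity
        hM.memLp_μ1 hpstar.1 hpos).exists_ae_condExp_sq_le
    · exact hM.exists_modification_hasDerivAt_condExp_atcResidual hm (hmeas hem) (hmeas hu)
        (hmeas hv) (hbdd hu hub) (hbdd hv hvb) hδ hc hbound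

theorem stmt_4
    {Ω 𝒳 : Type*} [MeasurableSpace Ω] [StandardBorelSpace Ω] [MeasurableSpace 𝒳]
    (P : Measure Ω) [IsProbabilityMeasure P]
    (X : Ω → 𝒳) (hX : Measurable X)
    (W : Ω → ℝ) (hWm : Measurable W) (hWbin : ∀ ω, W ω = 0 ∨ W ω = 1)
    (Y0 Y1 : Ω → ℝ) (hY0m : Measurable Y0) (hY1m : Measurable Y1)
    (CY : ℝ) (hYbdd : ∀ ω, |Y0 ω| ≤ CY ∧ |Y1 ω| ≤ CY)
    (Y : Ω → ℝ) (hSUTVA : ∀ ω, Y ω = W ω * Y1 ω + (1 - W ω) * Y0 ω)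
    (hUnconf : CondIndepFun (sigmaAlg X) hX.comap_le W (fun ω => (Y0 ω, Y1 ω)) P)
    (e : 𝒳 → ℝ) (hem : Measurable e)
    (hprop : P[W|sigmaAlg X] =ᵐ[P] (fun ω => e (X ω)))
    (hoverlap : ∀ᵐ ω ∂P, 0 < e (X ω) ∧ e (X ω) < 1)
    (μ0 μ1 : 𝒳 → ℝ) (hμ0m : Measurable μ0) (hμ1m : Measurable μ1)
    (Cμ : ℝ) (hμbdd : ∀ x, |μ0 x| ≤ Cμ ∧ |μ1 x| ≤ Cμ)
    (hμ0c : P[Y0|sigmaAlg X] =ᵐ[P] (fun ω => μ0 (X ω)))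
    (hμ1c : P[Y1|sigmaAlg X] =ᵐ[P] (fun ω => μ1 (X ω))) :
    (∀ pstar : ℝ, pstar ∈ Set.Ioo (0:ℝ) 1 → (∀ᵐ ω ∂P, e (X ω) < 1 - pstar) →
      (P[(fun ω => W ω * (μ1 (X ω) - μ0 (X ω)) - (W ω - e (X ω)) * (Y ω - μ0 (X ω)) / (1 - e (X ω)))|sigmaAlg X] =ᵐ[P] 0 ∧
       (∃ C : ℝ, ∀ᵐ ω ∂P,
          (P[(fun ω' => (W ω' * (μ1 (X ω') - μ0 (X ω')) - (W ω' - e (X ω')) * (Y ω' - μ0 (X ω')) / (1 - e (X ω'))) ^ 2)|sigmaAlg X]) ω ≤ C) ∧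
       (∀ he hη : 𝒳 → ℝ, Measurable he → Measurable hη →
          (∃ C : ℝ, ∀ x, |he x| ≤ C) → (∃ C : ℝ, ∀ x, |hη x| ≤ C) →
          (∃ δ > (0:ℝ), ∃ c > (0:ℝ), ∀ t : ℝ, |t| < δ →
            ∀ᵐ ω ∂P, c ≤ 1 - e (X ω) - t * he (X ω)) →
          ∃ g : ℝ → Ω → ℝ,
            (∀ t : ℝ, g t =ᵐ[P] P[(fun ω => W ω * (μ1 (X ω) - μ0 (X ω)) - (W ω - (e (X ω) + t * he (X ω))) * (Y ω - (μ0 (X ω) + t * hη (X ω))) / (1 - (e (X ω) + t * he (X ω))))|sigmaAlg X]) ∧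
            (∀ᵐ ω ∂P, HasDerivAt (fun t => g t ω) 0 0)))) ∧
    (∀ pstar : ℝ, pstar ∈ Set.Ioo (0:ℝ) 1 → (∀ᵐ ω ∂P, pstar < e (X ω)) →
      (P[(fun ω => (1 - W ω) * (μ1 (X ω) - μ0 (X ω)) - (W ω - e (X ω)) * (Y ω - μ1 (X ω)) / e (X ω))|sigmaAlg X] =ᵐ[P] 0 ∧
       (∃ C : ℝ, ∀ᵐ ω ∂P,
          (P[(fun ω' => ((1 - W ω') * (μ1 (X ω') - μ0 (X ω')) - (W ω' - e (X ω')) * (Y ω' - μ1 (X ω')) / e (X ω')) ^ 2)|sigmaAlg X]) ω ≤ C) ∧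
       (∀ he hη : 𝒳 → ℝ, Measurable he → Measurable hη →
          (∃ C : ℝ, ∀ x, |he x| ≤ C) → (∃ C : ℝ, ∀ x, |hη x| ≤ C) →
          (∃ δ > (0:ℝ), ∃ c > (0:ℝ), ∀ t : ℝ, |t| < δ →
            ∀ᵐ ω ∂P, c ≤ e (X ω) + t * he (X ω)) →
          ∃ g : ℝ → Ω → ℝ,
            (∀ t : ℝ, g t =ᵐ[P] P[(fun ω => (1 - W ω) * (μ1 (X ω) - μ0 (X ω)) - (W ω - (e (X ω) + t * he (X ω))) * (Y ω - (μ1 (X ω) + t * hη (X ω))) / (e (X ω) + t * he (X ω)))|sigmaAlg X]) ∧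
            (∀ᵐ ω ∂P, HasDerivAt (fun t => g t ω) 0 0)))) :=
  stmt_4_general P X hX W hWm hWbin Y0 Y1 hY0m hY1m CY hYbdd Y hSUTVA hUnconf e hem hprop μ0 μ1 hμ0m
    hμ1m hμ0c hμ1c
end

section
/- Suppose one-sided limited overlap holds: 0 < e(X) < 1 − p* < 1 a.s. For candidate nuisances, let τ̃ and μ̃0 be bounded measurable real functions on 𝒳 and ẽ a measurable function with ẽ(X) < 1 − p̃ < 1 a.s. for some p̃ ∈ (0,1), and write Ψ[τ̃, ẽ, μ̃0] = W·τ̃(X) − (W−ẽ(X))(Y−μ̃0(X))/(1−ẽ(X)). Then, almost surely, E[Ψ[τ̃, e, μ̃0] | σ(X)] = E[Ψ[τ̃, ẽ, μ0] | σ(X)] = E[Ψ[τ̃, e, μ0] | σ(X)] = e(X)·(τ̃(X) − τ(X)) (global double robustness), and consequently E[Ψ[τ̃, e, μ̃0] | σ(X)] = 0 a.s. and E[Ψ[τ̃, ẽ, μ0] | σ(X)] = 0 a.s. if and only if τ̃(X) = τ(X) a.s. -/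
open MeasureTheory ProbabilityTheory Filter Set

theorem ProbabilityTheory.CondIndepFun.ae_indepFun_condExpKernel_s7
    {Ω : Type*} {m mΩ : MeasurableSpace Ω} [StandardBorelSpace Ω] {hm : m ≤ mΩ}
    {P : Measure Ω} [IsFiniteMeasure P] {V Z : Ω → ℝ} (hV : Measurable V) (hZ : Measurable Z)
    (h : CondIndepFun m hm V Z P) :
    ∀ᵐ ω ∂P, IndepFun V Z (condExpKernel P m ω) := by
  rw [condIndepFun_iff_map_prod_eq_prod_map_map hV hZ] at h
  filter_upwards [ae_of_ae_trim hm h] with ω hω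
  rw [indepFun_iff_map_prod_eq_prod_map_map hV.aemeasurable hZ.aemeasurable]
  simpa [Kernel.map_apply _ (hV.prodMk hZ), Kernel.prod_apply, Kernel.map_apply _ hV,
    Kernel.map_apply _ hZ] using hω

namespace MeasureTheory

section HasCondExp

/-- Bundling integrability makes this closed under the algebraic operations, unlike the bare
`P[Z|m] =ᵐ[P] ζ`, which also holds with `ζ = 0` for every non-integrable `Z`. -/
def HasCondExp {Ω : Type*} (m : MeasurableSpace Ω) {mΩ : MeasurableSpace Ω} (P : Measure Ω)
    (Z ζ : Ω → ℝ) : Prop :=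
  Integrable Z P ∧ P[Z|m] =ᵐ[P] ζ

variable {Ω : Type*} {m mΩ : MeasurableSpace Ω} {P : Measure Ω} {V Z : Ω → ℝ} {v z : Ω → ℝ}

theorem HasCondExp.add (hV : HasCondExp m P V v) (hZ : HasCondExp m P Z z) :
    HasCondExp m P (V + Z) (v + z) :=
  ⟨hV.1.add hZ.1, (condExp_add hV.1 hZ.1 m).trans (hV.2.add hZ.2)⟩

theorem HasCondExp.sub (hV : HasCondExp m P V v) (hZ : HasCondExp m P Z z) :
    HasCondExp m P (V - Z) (v - z) :=
  ⟨hV.1.sub hZ.1, (condExp_sub hV.1 hZ.1 m).trans (hV.2.sub hZ.2)⟩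

theorem hasCondExp_const (hm : m ≤ mΩ) [IsFiniteMeasure P] (c : ℝ) :
    HasCondExp m P (fun _ ↦ c) (fun _ ↦ c) :=
  ⟨integrable_const c, (condExp_const hm c).eventuallyEq⟩

theorem HasCondExp.mul_left (hm : m ≤ mΩ) [IsFiniteMeasure P] (hZ : HasCondExp m P Z z)
    {g : Ω → ℝ} (hg : StronglyMeasurable[m] g) {C : ℝ} (hgC : ∀ᵐ ω ∂P, ‖g ω‖ ≤ C) :
    HasCondExp m P (g * Z) (g * z) :=
  ⟨hZ.1.bdd_mul (hg.mono hm).aestronglyMeasurable hgC,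
    (condExp_stronglyMeasurable_mul_of_bound hm hg hZ.1 C hgC).trans (EventuallyEq.rfl.mul hZ.2)⟩

theorem HasCondExp.mul_of_condIndepFun [StandardBorelSpace Ω] [IsFiniteMeasure P] {hm : m ≤ mΩ}
    (hV : HasCondExp m P V v) (hZ : HasCondExp m P Z z) (hVm : Measurable V) (hZm : Measurable Z)
    (hVZ : Integrable (V * Z) P) (hind : CondIndepFun m hm V Z P) :
    HasCondExp m P (V * Z) (v * z) := by
  refine ⟨hVZ, ?_⟩
  filter_upwards [hind.ae_indepFun_condExpKernel_s7 hVm hZm,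
    condExp_ae_eq_integral_condExpKernel hm hVZ, condExp_ae_eq_integral_condExpKernel hm hV.1,
    condExp_ae_eq_integral_condExpKernel hm hZ.1, hV.2, hZ.2] with ω hindω hVZω hVω hZω hv hz
  rw [Pi.mul_apply, hVZω, ← hv, ← hz, hVω, hZω]
  exact hindω.integral_mul_eq_mul_integral hVm.aestronglyMeasurable hZm.aestronglyMeasurable

theorem HasCondExp.congr (hZ : HasCondExp m P Z z) (hV : Z =ᵐ[P] V) (hv : z =ᵐ[P] v) :
    HasCondExp m P V v :=
  ⟨hZ.1.congr hV, (condExp_congr_ae hV.symm).trans (hZ.2.trans hv)⟩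

end HasCondExp

end MeasureTheory

lemma abs_div_one_sub_le {a p : ℝ} (hp : 0 < p) (ha : a < 1 - p) : |a / (1 - a)| ≤ p⁻¹ + 1 := by
  have h : 0 < 1 - a := by linarith
  have hinv : (1 - a)⁻¹ ≤ p⁻¹ := inv_anti₀ hp (by linarith)
  have hsplit : a / (1 - a) = (1 - a)⁻¹ - 1 := by field_simp; ring
  rw [hsplit, abs_le]
  constructor <;> linarith [inv_pos.mpr h]

lemma psi_decomposition {w y0 y1 t a b : ℝ} (hw : w = 0 ∨ w = 1) (ha : a ≠ 1) :
    w * t - (w - a) * (w * y1 + (1 - w) * y0 - b) / (1 - a)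
      = (t + b) * w - w * y1 + a / (1 - a) * ((1 - w) * y0 - b * (1 - w)) := by
  have : 1 - a ≠ 0 := sub_ne_zero.mpr ha.symm
  rcases hw with rfl | rfl <;> field_simp <;> ring

lemma doubly_robust_identity {e t μ0 μ1 a b : ℝ} (ha : a ≠ 1) (hab : a = e ∨ b = μ0) :
    e * (t - μ1 + b) + a / (1 - a) * ((1 - e) * (μ0 - b)) = e * (t - (μ1 - μ0)) := by
  have : 1 - a ≠ 0 := sub_ne_zero.mpr ha.symm
  rcases hab with rfl | rfl
  · field_simp
    ring
  · ring

section Psi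

variable {Ω 𝒳 : Type*} [MeasurableSpace Ω] [MeasurableSpace 𝒳] {P : Measure Ω}
  [IsFiniteMeasure P] {X : Ω → 𝒳} {W Y0 Y1 Y : Ω → ℝ} {e μ0 μ1 τ a b : 𝒳 → ℝ}

noncomputable def psi (X : Ω → 𝒳) (W Y : Ω → ℝ) (τ a b : 𝒳 → ℝ) : Ω → ℝ :=
  fun ω ↦ W ω * τ (X ω) - (W ω - a (X ω)) * (Y ω - b (X ω)) / (1 - a (X ω))

theorem hasCondExp_psi (hX : Measurable X) (hWbin : ∀ ω, W ω = 0 ∨ W ω = 1)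
    (hY : ∀ ω, Y ω = W ω * Y1 ω + (1 - W ω) * Y0 ω)
    (hW : HasCondExp (sigmaAlg X) P W fun ω ↦ e (X ω))
    (hWY1 : HasCondExp (sigmaAlg X) P (W * Y1) fun ω ↦ e (X ω) * μ1 (X ω))
    (hWY0 : HasCondExp (sigmaAlg X) P ((1 - W) * Y0) fun ω ↦ (1 - e (X ω)) * μ0 (X ω))
    (hτ : Measurable τ) {Cτ : ℝ} (hτC : ∀ x, |τ x| ≤ Cτ) (ha : Measurable a)
    (hb : Measurable b) {Cb : ℝ} (hbC : ∀ x, |b x| ≤ Cb)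
    {p : ℝ} (hp : 0 < p) (hap : ∀ᵐ ω ∂P, a (X ω) < 1 - p) :
    HasCondExp (sigmaAlg X) P (psi X W Y τ a b) fun ω ↦
      e (X ω) * (τ (X ω) - μ1 (X ω) + b (X ω))
        + a (X ω) / (1 - a (X ω)) * ((1 - e (X ω)) * (μ0 (X ω) - b (X ω))) := by
  have hm : sigmaAlg X ≤ _ := hX.comap_le
  have hXm : Measurable[sigmaAlg X] X := comap_measurable X
  have h1W : HasCondExp (sigmaAlg X) P (1 - W) fun ω ↦ 1 - e (X ω) :=
    (hasCondExp_const hm 1).sub hW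
  have hWY0b := hWY0.sub (h1W.mul_left hm (g := fun ω ↦ b (X ω))
    (hb.comp hXm).stronglyMeasurable (ae_of_all _ fun ω ↦ hbC (X ω)))
  have hτb := hW.mul_left hm (g := fun ω ↦ τ (X ω) + b (X ω))
    ((hτ.comp hXm).add (hb.comp hXm)).stronglyMeasurable
    (ae_of_all _ fun ω ↦ (abs_add_le _ _).trans (add_le_add (hτC (X ω)) (hbC (X ω))))
  have hr := hWY0b.mul_left hm (g := fun ω ↦ a (X ω) / (1 - a (X ω)))
    ((ha.comp hXm).div (measurable_const.sub (ha.comp hXm))).stronglyMeasurable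
    (hap.mono fun ω h ↦ abs_div_one_sub_le hp h)
  refine (hτb.sub hWY1).add hr |>.congr ?_ (ae_of_all _ fun ω ↦ ?_)
  · filter_upwards [hap] with ω h
    simp only [psi, hY ω]
    exact (psi_decomposition (hWbin ω) (by linarith)).symm
  · simp only [Pi.add_apply, Pi.sub_apply, Pi.mul_apply]
    ring

theorem condExp_psi_ae_eq (hX : Measurable X) (hWbin : ∀ ω, W ω = 0 ∨ W ω = 1)
    (hY : ∀ ω, Y ω = W ω * Y1 ω + (1 - W ω) * Y0 ω)
    (hW : HasCondExp (sigmaAlg X) P W fun ω ↦ e (X ω))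
    (hWY1 : HasCondExp (sigmaAlg X) P (W * Y1) fun ω ↦ e (X ω) * μ1 (X ω))
    (hWY0 : HasCondExp (sigmaAlg X) P ((1 - W) * Y0) fun ω ↦ (1 - e (X ω)) * μ0 (X ω))
    (hτ : Measurable τ) {Cτ : ℝ} (hτC : ∀ x, |τ x| ≤ Cτ) (ha : Measurable a)
    (hb : Measurable b) {Cb : ℝ} (hbC : ∀ x, |b x| ≤ Cb)
    {p : ℝ} (hp : 0 < p) (hap : ∀ᵐ ω ∂P, a (X ω) < 1 - p)
    (hab : ∀ᵐ ω ∂P, a (X ω) = e (X ω) ∨ b (X ω) = μ0 (X ω)) :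
    P[psi X W Y τ a b|sigmaAlg X] =ᵐ[P] fun ω ↦ e (X ω) * (τ (X ω) - (μ1 (X ω) - μ0 (X ω))) := by
  refine (hasCondExp_psi hX hWbin hY hW hWY1 hWY0 hτ hτC ha hb hbC hp hap).2.trans ?_
  filter_upwards [hap, hab] with ω hlt hω
  exact doubly_robust_identity (by linarith) hω

end Psi

theorem stmt_7_general
    {Ω 𝒳 : Type*} [MeasurableSpace Ω] [StandardBorelSpace Ω] [MeasurableSpace 𝒳]
    (P : Measure Ω) [IsProbabilityMeasure P]
    (X : Ω → 𝒳) (hX : Measurable X)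
    (W : Ω → ℝ) (hWm : Measurable W) (hWbin : ∀ ω, W ω = 0 ∨ W ω = 1)
    (Y0 Y1 : Ω → ℝ) (hY0m : Measurable Y0) (hY1m : Measurable Y1)
    (CY : ℝ) (hYbdd : ∀ ω, |Y0 ω| ≤ CY ∧ |Y1 ω| ≤ CY)
    (Y : Ω → ℝ) (hSUTVA : ∀ ω, Y ω = W ω * Y1 ω + (1 - W ω) * Y0 ω)
    (hUnconf : CondIndepFun (sigmaAlg X) hX.comap_le W (fun ω => (Y0 ω, Y1 ω)) P)
    (e : 𝒳 → ℝ) (hem : Measurable e)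
    (hprop : P[W|sigmaAlg X] =ᵐ[P] (fun ω => e (X ω)))
    (hoverlap : ∀ᵐ ω ∂P, 0 < e (X ω) ∧ e (X ω) < 1)
    (μ0 μ1 : 𝒳 → ℝ) (hμ0m : Measurable μ0)
    (Cμ : ℝ) (hμbdd : ∀ x, |μ0 x| ≤ Cμ ∧ |μ1 x| ≤ Cμ)
    (hμ0c : P[Y0|sigmaAlg X] =ᵐ[P] (fun ω => μ0 (X ω)))
    (hμ1c : P[Y1|sigmaAlg X] =ᵐ[P] (fun ω => μ1 (X ω)))
    (pstar : ℝ) (hpstar : pstar ∈ Set.Ioo (0:ℝ) 1)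
    (hov : ∀ᵐ ω ∂P, e (X ω) < 1 - pstar)
    (τt m0t : 𝒳 → ℝ) (hτtm : Measurable τt) (hm0tm : Measurable m0t)
    (Cτt : ℝ) (hτtb : ∀ x, |τt x| ≤ Cτt) (Cm0t : ℝ) (hm0tb : ∀ x, |m0t x| ≤ Cm0t)
    (et : 𝒳 → ℝ) (hetm : Measurable et)
    (pt : ℝ) (hpt : pt ∈ Set.Ioo (0:ℝ) 1) (hetb : ∀ᵐ ω ∂P, et (X ω) < 1 - pt) :
    (P[(fun ω => W ω * τt (X ω) - (W ω - e (X ω)) * (Y ω - m0t (X ω)) / (1 - e (X ω)))|sigmaAlg X] =ᵐ[P] (fun ω => e (X ω) * (τt (X ω) - (μ1 (X ω) - μ0 (X ω))))) ∧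
    (P[(fun ω => W ω * τt (X ω) - (W ω - et (X ω)) * (Y ω - μ0 (X ω)) / (1 - et (X ω)))|sigmaAlg X] =ᵐ[P] (fun ω => e (X ω) * (τt (X ω) - (μ1 (X ω) - μ0 (X ω))))) ∧
    (P[(fun ω => W ω * τt (X ω) - (W ω - e (X ω)) * (Y ω - μ0 (X ω)) / (1 - e (X ω)))|sigmaAlg X] =ᵐ[P] (fun ω => e (X ω) * (τt (X ω) - (μ1 (X ω) - μ0 (X ω))))) ∧
    ((P[(fun ω => W ω * τt (X ω) - (W ω - e (X ω)) * (Y ω - m0t (X ω)) / (1 - e (X ω)))|sigmaAlg X] =ᵐ[P] 0 ∧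
      P[(fun ω => W ω * τt (X ω) - (W ω - et (X ω)) * (Y ω - μ0 (X ω)) / (1 - et (X ω)))|sigmaAlg X] =ᵐ[P] 0) ↔
      (∀ᵐ ω ∂P, τt (X ω) = μ1 (X ω) - μ0 (X ω))) := by
  have hm := hX.comap_le
  have hWC : ∀ ω, ‖W ω‖ ≤ 1 ∧ ‖1 - W ω‖ ≤ 1 := fun ω ↦ by rcases hWbin ω with h | h <;> simp [h]
  have hW : HasCondExp (sigmaAlg X) P W fun ω ↦ e (X ω) :=
    ⟨.of_bound hWm.aestronglyMeasurable 1 (ae_of_all _ fun ω ↦ (hWC ω).1), hprop⟩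
  have hY0 : HasCondExp (sigmaAlg X) P Y0 fun ω ↦ μ0 (X ω) :=
    ⟨.of_bound hY0m.aestronglyMeasurable CY (ae_of_all _ fun ω ↦ (hYbdd ω).1), hμ0c⟩
  have hY1 : HasCondExp (sigmaAlg X) P Y1 fun ω ↦ μ1 (X ω) :=
    ⟨.of_bound hY1m.aestronglyMeasurable CY (ae_of_all _ fun ω ↦ (hYbdd ω).2), hμ1c⟩
  have hWY1 := hW.mul_of_condIndepFun hY1 hWm hY1m
    (hY1.1.bdd_mul hWm.aestronglyMeasurable (ae_of_all _ fun ω ↦ (hWC ω).1))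
    (hUnconf.comp measurable_id measurable_snd)
  have hWY0 := ((hasCondExp_const hm 1).sub hW).mul_of_condIndepFun hY0
    (measurable_const.sub hWm) hY0m
    (hY0.1.bdd_mul (measurable_const.sub hWm).aestronglyMeasurable
      (ae_of_all _ fun ω ↦ (hWC ω).2))
    (hUnconf.comp (measurable_const.sub measurable_id) measurable_fst)
  have hA := condExp_psi_ae_eq hX hWbin hSUTVA hW hWY1 hWY0 hτtm hτtb hem hm0tm hm0tb hpstar.1
    hov (ae_of_all _ fun _ ↦ .inl rfl)
  have hB := condExp_psi_ae_eq hX hWbin hSUTVA hW hWY1 hWY0 hτtm hτtb hetm hμ0m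
    (fun x ↦ (hμbdd x).1) hpt.1 hetb (ae_of_all _ fun _ ↦ .inr rfl)
  have hC := condExp_psi_ae_eq hX hWbin hSUTVA hW hWY1 hWY0 hτtm hτtb hem hμ0m
    (fun x ↦ (hμbdd x).1) hpstar.1 hov (ae_of_all _ fun _ ↦ .inl rfl)
  have hzero : (fun ω ↦ e (X ω) * (τt (X ω) - (μ1 (X ω) - μ0 (X ω)))) =ᵐ[P] 0 ↔
      ∀ᵐ ω ∂P, τt (X ω) = μ1 (X ω) - μ0 (X ω) := by
    refine ⟨fun h ↦ ?_, fun h ↦ ?_⟩ <;> filter_upwards [h, hoverlap] with ω hω hpos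
    · simpa [hpos.1.ne', sub_eq_zero] using hω
    · simp [hω]
  exact ⟨hA, hB, hC, fun h ↦ hzero.1 (hA.symm.trans h.1),
    fun h ↦ ⟨hA.trans (hzero.2 h), hB.trans (hzero.2 h)⟩⟩

theorem stmt_7
    {Ω 𝒳 : Type*} [MeasurableSpace Ω] [StandardBorelSpace Ω] [MeasurableSpace 𝒳]
    (P : Measure Ω) [IsProbabilityMeasure P]
    (X : Ω → 𝒳) (hX : Measurable X)
    (W : Ω → ℝ) (hWm : Measurable W) (hWbin : ∀ ω, W ω = 0 ∨ W ω = 1)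
    (Y0 Y1 : Ω → ℝ) (hY0m : Measurable Y0) (hY1m : Measurable Y1)
    (CY : ℝ) (hYbdd : ∀ ω, |Y0 ω| ≤ CY ∧ |Y1 ω| ≤ CY)
    (Y : Ω → ℝ) (hSUTVA : ∀ ω, Y ω = W ω * Y1 ω + (1 - W ω) * Y0 ω)
    (hUnconf : CondIndepFun (sigmaAlg X) hX.comap_le W (fun ω => (Y0 ω, Y1 ω)) P)
    (e : 𝒳 → ℝ) (hem : Measurable e)
    (hprop : P[W|sigmaAlg X] =ᵐ[P] (fun ω => e (X ω)))
    (hoverlap : ∀ᵐ ω ∂P, 0 < e (X ω) ∧ e (X ω) < 1)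
    (μ0 μ1 : 𝒳 → ℝ) (hμ0m : Measurable μ0) (hμ1m : Measurable μ1)
    (Cμ : ℝ) (hμbdd : ∀ x, |μ0 x| ≤ Cμ ∧ |μ1 x| ≤ Cμ)
    (hμ0c : P[Y0|sigmaAlg X] =ᵐ[P] (fun ω => μ0 (X ω)))
    (hμ1c : P[Y1|sigmaAlg X] =ᵐ[P] (fun ω => μ1 (X ω)))
    (pstar : ℝ) (hpstar : pstar ∈ Set.Ioo (0:ℝ) 1)
    (hov : ∀ᵐ ω ∂P, e (X ω) < 1 - pstar)
    (τt m0t : 𝒳 → ℝ) (hτtm : Measurable τt) (hm0tm : Measurable m0t)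
    (Cτt : ℝ) (hτtb : ∀ x, |τt x| ≤ Cτt) (Cm0t : ℝ) (hm0tb : ∀ x, |m0t x| ≤ Cm0t)
    (et : 𝒳 → ℝ) (hetm : Measurable et)
    (pt : ℝ) (hpt : pt ∈ Set.Ioo (0:ℝ) 1) (hetb : ∀ᵐ ω ∂P, et (X ω) < 1 - pt) :
    (P[(fun ω => W ω * τt (X ω) - (W ω - e (X ω)) * (Y ω - m0t (X ω)) / (1 - e (X ω)))|sigmaAlg X] =ᵐ[P] (fun ω => e (X ω) * (τt (X ω) - (μ1 (X ω) - μ0 (X ω))))) ∧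
    (P[(fun ω => W ω * τt (X ω) - (W ω - et (X ω)) * (Y ω - μ0 (X ω)) / (1 - et (X ω)))|sigmaAlg X] =ᵐ[P] (fun ω => e (X ω) * (τt (X ω) - (μ1 (X ω) - μ0 (X ω))))) ∧
    (P[(fun ω => W ω * τt (X ω) - (W ω - e (X ω)) * (Y ω - μ0 (X ω)) / (1 - e (X ω)))|sigmaAlg X] =ᵐ[P] (fun ω => e (X ω) * (τt (X ω) - (μ1 (X ω) - μ0 (X ω))))) ∧
    ((P[(fun ω => W ω * τt (X ω) - (W ω - e (X ω)) * (Y ω - m0t (X ω)) / (1 - e (X ω)))|sigmaAlg X] =ᵐ[P] 0 ∧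
      P[(fun ω => W ω * τt (X ω) - (W ω - et (X ω)) * (Y ω - μ0 (X ω)) / (1 - et (X ω)))|sigmaAlg X] =ᵐ[P] 0) ↔
      (∀ᵐ ω ∂P, τt (X ω) = μ1 (X ω) - μ0 (X ω))) :=
  stmt_7_general P X hX W hWm hWbin Y0 Y1 hY0m hY1m CY hYbdd Y hSUTVA hUnconf e hem hprop hoverlap
    μ0 μ1 hμ0m Cμ hμbdd hμ0c hμ1c pstar hpstar hov τt m0t hτtm hm0tm Cτt hτtb Cm0t hm0tb et hetm pt
    hpt hetb
end

section
/- Define the weighted AIPW residual Ψ[τ̃, ẽ, (μ̃0,μ̃1)] = ẽ(X)(1−ẽ(X))·τ̃(X) − ẽ(X)(1−ẽ(X))·(μ̃1(X)−μ̃0(X)) − (W−ẽ(X))·(Y − W·μ̃1(X) − (1−W)·μ̃0(X)) for bounded measurable candidates τ̃, μ̃0, μ̃1 and measurable ẽ with 0 < ẽ(X) < 1 a.s. Then, almost surely: (i) E[Ψ[τ̃, e, (μ̃0,μ̃1)] | σ(X)] = e(X)(1−e(X))·(τ̃(X)−τ(X)) and E[Ψ[τ̃, ẽ, (μ0,μ1)]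 | σ(X)] = ẽ(X)(1−ẽ(X))·(τ̃(X)−τ(X)), so both vanish a.s. iff τ̃(X) = τ(X) a.s. (double robustness); and (ii) Neyman orthogonality holds: for bounded measurable directions (h_e, h_{μ0}, h_{μ1}) on 𝒳, for almost every ω the function t ↦ E[Ψ[τ, e+t·h_e, (μ0+t·h_{μ0}, μ1+t·h_{μ1})] | σ(X)](ω) equals t²[(e−1)·h_e·h_{μ1} − e·h_e·h_{μ0}] + t³·h_e²(h_{μ1}−h_{μ0}) evaluated at X(ω), hence has derivative 0 at t = 0. -/
/-!
Because `W ∈ {0, 1}`, SUTVA writes the score `Ψ[τ̃, ẽ, (μ̃₀, μ̃₁)]` as a combination of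
`W Y₁, W Y₀, W, Y₀, 1` with bounded σ(X)-measurable coefficients, and unconfoundedness gives
`E[W Y_w | X] = e(X) μ_w(X)`. Pulling the coefficients out of `E[· | X]` yields
  `E[Ψ | X] = ẽ (1 - ẽ) (τ̃ - (μ̃₁ - μ̃₀)) - ((1 - ẽ) e (μ₁ - μ̃₁) - ẽ (1 - e) (μ₀ - μ̃₀))`.
The last bracket vanishes when `ẽ = e` or `μ̃ = μ` (double robustness). For `τ̃ = τ` the whole
right-hand side equals `(ẽ - e) ((1 - ẽ) (μ̃₁ - μ₁) + ẽ (μ̃₀ - μ₀))`, a product of the two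
nuisance errors, which is `O(t²)` along `(e + t hₑ, μ + t h)` (Neyman orthogonality).

Conditional independence factorises `E[· | X]` on indicators only. It is extended to bounded
functions one factor at a time: if `∫ 1_t b = 0` for all `t ∈ σ(g)`, then `E[b | σ(g)] = 0`, so
`∫ V b = 0` for every bounded σ(g)-measurable `V`.
-/

open MeasureTheory ProbabilityTheory Filter Set

open scoped ENNReal

section CondIndep

variable {Ω : Type*} {m m₂ m₀ : MeasurableSpace Ω} {μ : Measure Ω} [IsFiniteMeasure μ]

theorem integral_mul_eq_zero_of_forall_indicator (hm : m ≤ m₀)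
    {b : Ω → ℝ} (hb : Integrable b μ)
    (h : ∀ t, MeasurableSet[m] t → ∫ ω, t.indicator 1 ω * b ω ∂μ = 0)
    {V : Ω → ℝ} (hVm : StronglyMeasurable[m] V) (hV : MemLp V ∞ μ) :
    ∫ ω, V ω * b ω ∂μ = 0 := by
  have hb0 : 0 =ᵐ[μ] μ[b|m] := by
    refine ae_eq_condExp_of_forall_setIntegral_eq hm hb (fun _ _ _ => integrableOn_zero)
      (fun t ht _ => ?_) aestronglyMeasurable_zero
    rw [integral_zero', ← integral_indicator (hm t ht), ← h t ht]
    congr 1 with ω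
    by_cases hω : ω ∈ t <;> simp [hω]
  calc ∫ ω, V ω * b ω ∂μ = ∫ ω, μ[V * b|m] ω ∂μ := (integral_condExp hm).symm
    _ = ∫ ω, V ω * μ[b|m] ω ∂μ :=
      integral_congr_ae (condExp_mul_of_stronglyMeasurable_left hVm (hb.mul_of_top_right hV) hb)
    _ = 0 := by
      rw [← integral_zero Ω ℝ]
      refine integral_congr_ae ?_
      filter_upwards [hb0] with ω hω
      simp [← hω]

theorem setIntegral_mul_sub_condExp (hm : m ≤ m₀) {s : Set Ω}
    (hs : MeasurableSet[m] s) {F G : Ω → ℝ} (hF : Integrable F μ) (hG : MemLp G ∞ μ) :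
    ∫ ω in s, G ω * (F ω - μ[F|m] ω) ∂μ
      = ∫ ω in s, F ω * G ω ∂μ - ∫ ω in s, μ[F|m] ω * μ[G|m] ω ∂μ := by
  have hGF : Integrable (fun ω => G ω * F ω) μ := hF.mul_of_top_right hG
  have hGcF : Integrable (fun ω => G ω * μ[F|m] ω) μ := integrable_condExp.mul_of_top_right hG
  have hcFG : Integrable (μ[F|m] * G) μ := integrable_condExp.mul_of_top_left hG
  have hpull : ∫ ω in s, G ω * μ[F|m] ω ∂μ = ∫ ω in s, μ[F|m] ω * μ[G|m] ω ∂μ :=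
    calc ∫ ω in s, G ω * μ[F|m] ω ∂μ = ∫ ω in s, μ[μ[F|m] * G|m] ω ∂μ := by
          rw [setIntegral_condExp hm hcFG hs]; simp_rw [Pi.mul_apply, mul_comm]
      _ = ∫ ω in s, μ[F|m] ω * μ[G|m] ω ∂μ := setIntegral_congr_ae (hm s hs) (by
          filter_upwards [condExp_mul_of_stronglyMeasurable_left stronglyMeasurable_condExp hcFG
            (hG.integrable le_top)] with ω hω _ using hω)
  simp_rw [mul_sub]
  rw [integral_sub hGF.integrableOn hGcF.integrableOn, hpull]
  simp_rw [mul_comm (G _)]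

theorem setIntegral_mul_condExp_of_forall_indicator (hm : m ≤ m₀) (hm₂ : m₂ ≤ m₀) {s : Set Ω}
    (hs : MeasurableSet[m] s) {F : Ω → ℝ} (hF : Integrable F μ)
    (h : ∀ t, MeasurableSet[m₂] t →
      ∫ ω in s, F ω * t.indicator 1 ω ∂μ = ∫ ω in s, μ[F|m] ω * μ[t.indicator 1|m] ω ∂μ)
    {G : Ω → ℝ} (hGm : StronglyMeasurable[m₂] G) (hG : MemLp G ∞ μ) :
    ∫ ω in s, F ω * G ω ∂μ = ∫ ω in s, μ[F|m] ω * μ[G|m] ω ∂μ := by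
  rw [← sub_eq_zero, ← setIntegral_mul_sub_condExp hm hs hF hG]
  refine integral_mul_eq_zero_of_forall_indicator hm₂ (hF.sub integrable_condExp).integrableOn
    (fun t ht => ?_) hGm (hG.restrict s)
  exact (setIntegral_mul_sub_condExp hm hs hF ((memLp_top_const 1).indicator (hm₂ t ht))).trans
    (sub_eq_zero.mpr (h t ht))

variable [StandardBorelSpace Ω] {β γ : Type*} {mβ : MeasurableSpace β} {mγ : MeasurableSpace γ}

theorem condExp_mul_of_condIndepFun (hm : m ≤ m₀) {f : Ω → β} {g : Ω → γ}
    (hf : Measurable f) (hg : Measurable g) (hfg : CondIndepFun m hm f g μ) {F G : Ω → ℝ}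
    (hFm : StronglyMeasurable[mβ.comap f] F) (hF : MemLp F ∞ μ)
    (hGm : StronglyMeasurable[mγ.comap g] G) (hG : MemLp G ∞ μ) :
    μ[F * G|m] =ᵐ[μ] μ[F|m] * μ[G|m] := by
  have h_sets : ∀ A B, MeasurableSet A → MeasurableSet B → ∀ s, MeasurableSet[m] s →
      ∫ ω in s, (f ⁻¹' A).indicator (1 : Ω → ℝ) ω * (g ⁻¹' B).indicator 1 ω ∂μ
        = ∫ ω in s, μ[(f ⁻¹' A).indicator (1 : Ω → ℝ)|m] ω
            * μ[(g ⁻¹' B).indicator (1 : Ω → ℝ)|m] ω ∂μ := by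
    intro A B hA hB s hs
    have hAB : Integrable ((f ⁻¹' A ∩ g ⁻¹' B).indicator (1 : Ω → ℝ)) μ :=
      (integrable_const 1).indicator ((hf hA).inter (hg hB))
    simp_rw [← Pi.mul_apply (f := (f ⁻¹' A).indicator 1), ← Set.inter_indicator_one]
    exact (setIntegral_condExp hm hAB hs).symm.trans <| setIntegral_congr_ae (hm s hs) <| by
      filter_upwards [(condIndepFun_iff_condExp_inter_preimage_eq_mul hf hg).mp hfg A B hA hB]
        with ω hω _ using hω
  have h_left : ∀ A, MeasurableSet A → ∀ s, MeasurableSet[m] s →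
      ∫ ω in s, (f ⁻¹' A).indicator 1 ω * G ω ∂μ
        = ∫ ω in s, μ[(f ⁻¹' A).indicator 1|m] ω * μ[G|m] ω ∂μ := by
    intro A hA s hs
    refine setIntegral_mul_condExp_of_forall_indicator hm hg.comap_le hs
      ((integrable_const 1).indicator (hf hA)) ?_ hGm hG
    rintro _ ⟨B, hB, rfl⟩
    exact h_sets A B hA hB s hs
  have h_all : ∀ s, MeasurableSet[m] s →
      ∫ ω in s, μ[F|m] ω * μ[G|m] ω ∂μ = ∫ ω in s, F ω * G ω ∂μ := by
    intro s hs
    simp_rw [mul_comm (μ[F|m] _), mul_comm (F _)]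
    refine (setIntegral_mul_condExp_of_forall_indicator hm hf.comap_le hs (hG.integrable le_top)
      ?_ hFm hF).symm
    rintro _ ⟨A, hA, rfl⟩
    simp_rw [mul_comm (G _), mul_comm (μ[G|m] _)]
    exact h_left A hA s hs
  refine (ae_eq_condExp_of_forall_setIntegral_eq hm (hF.integrable le_top |>.mul_of_top_left hG)
    (fun s _ _ => ?_) (fun s hs _ => h_all s hs) ?_).symm
  · exact (integrable_condExp.mul_of_top_left (hG.condExp le_top)).integrableOn
  · exact (stronglyMeasurable_condExp.mul stronglyMeasurable_condExp).aestronglyMeasurable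

theorem condExp_mul_outcomes_of_condIndepFun {W Y₀ Y₁ : Ω → ℝ} (hm : m ≤ m₀) (hWm : Measurable W)
    (hY₀m : Measurable Y₀) (hY₁m : Measurable Y₁) (hW : MemLp W ∞ μ) (hY₀ : MemLp Y₀ ∞ μ)
    (hY₁ : MemLp Y₁ ∞ μ) (h : CondIndepFun m hm W (fun ω => (Y₀ ω, Y₁ ω)) μ) :
    μ[W * Y₀|m] =ᵐ[μ] μ[W|m] * μ[Y₀|m] ∧ μ[W * Y₁|m] =ᵐ[μ] μ[W|m] * μ[Y₁|m] :=
  ⟨condExp_mul_of_condIndepFun (G := Y₀) hm hWm (hY₀m.prodMk hY₁m) h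
      (comap_measurable W).stronglyMeasurable hW
      (measurable_fst.comp (comap_measurable _)).stronglyMeasurable hY₀,
    condExp_mul_of_condIndepFun (G := Y₁) hm hWm (hY₀m.prodMk hY₁m) h
      (comap_measurable W).stronglyMeasurable hW
      (measurable_snd.comp (comap_measurable _)).stronglyMeasurable hY₁⟩

end CondIndep

section AIPW

variable {Ω : Type*} {m m₀ : MeasurableSpace Ω} {μ : Measure Ω}

theorem condExp_finsetSum_mul {ι : Type*} (s : Finset ι) {c Z ζ : ι → Ω → ℝ}
    (hcm : ∀ i ∈ s, StronglyMeasurable[m] (c i)) (hc : ∀ i ∈ s, MemLp (c i) ∞ μ)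
    (hZ : ∀ i ∈ s, Integrable (Z i) μ) (hζ : ∀ i ∈ s, μ[Z i|m] =ᵐ[μ] ζ i) :
    μ[∑ i ∈ s, c i * Z i|m] =ᵐ[μ] ∑ i ∈ s, c i * ζ i :=
  (condExp_finsetSum (fun i hi => (hZ i hi).mul_of_top_right (hc i hi)) m).trans <|
    eventuallyEq_sum fun i hi => (condExp_mul_of_stronglyMeasurable_left (hcm i hi)
      ((hZ i hi).mul_of_top_right (hc i hi)) (hZ i hi)).trans (EventuallyEq.rfl.mul (hζ i hi))

/-- The paper's `Ψ[τ, a, (b₀, b₁)]` for treatment `W` and observed outcome `Y`, with candidate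
CATE `τ`, propensity `a` and outcome regressions `b₀, b₁`. -/
def aipwScore (W Y τ a b₀ b₁ : Ω → ℝ) : Ω → ℝ := fun ω =>
  a ω * (1 - a ω) * τ ω - a ω * (1 - a ω) * (b₁ ω - b₀ ω)
    - (W ω - a ω) * (Y ω - W ω * b₁ ω - (1 - W ω) * b₀ ω)

theorem aipwScore_eq_sum {W Y Y₀ Y₁ : Ω → ℝ} (hW : ∀ ω, W ω = 0 ∨ W ω = 1)
    (hY : ∀ ω, Y ω = W ω * Y₁ ω + (1 - W ω) * Y₀ ω) (τ a b₀ b₁ : Ω → ℝ) :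
    aipwScore W Y τ a b₀ b₁ = ∑ i, ![-(1 - a), -a, (1 - a) * b₁ + a * b₀, a,
      a * (1 - a) * (τ - (b₁ - b₀)) - a * b₀] i * ![W * Y₁, W * Y₀, W, Y₀, 1] i := by
  funext ω
  simp only [aipwScore, hY, Fin.sum_univ_five, Finset.sum_apply]
  rcases hW ω with h | h <;> simp [h] <;> ring

theorem condExp_aipwScore [IsFiniteMeasure μ] (hm : m ≤ m₀) {W Y Y₀ Y₁ : Ω → ℝ}
    (hW : ∀ ω, W ω = 0 ∨ W ω = 1) (hY : ∀ ω, Y ω = W ω * Y₁ ω + (1 - W ω) * Y₀ ω)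
    (hWL : MemLp W ∞ μ) (hY₀ : MemLp Y₀ ∞ μ) (hY₁ : MemLp Y₁ ∞ μ) {π ν₀ ν₁ : Ω → ℝ}
    (hπ : μ[W|m] =ᵐ[μ] π) (hν₀ : μ[Y₀|m] =ᵐ[μ] ν₀)
    (hπν₀ : μ[W * Y₀|m] =ᵐ[μ] π * ν₀) (hπν₁ : μ[W * Y₁|m] =ᵐ[μ] π * ν₁)
    {τ a b₀ b₁ : Ω → ℝ} (hτm : StronglyMeasurable[m] τ) (ham : StronglyMeasurable[m] a)
    (hb₀m : StronglyMeasurable[m] b₀) (hb₁m : StronglyMeasurable[m] b₁)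
    (hτ : MemLp τ ∞ μ) (ha : MemLp a ∞ μ) (hb₀ : MemLp b₀ ∞ μ) (hb₁ : MemLp b₁ ∞ μ) :
    μ[aipwScore W Y τ a b₀ b₁|m] =ᵐ[μ] fun ω =>
      a ω * (1 - a ω) * (τ ω - (b₁ ω - b₀ ω))
        - ((1 - a ω) * π ω * (ν₁ ω - b₁ ω) - a ω * (1 - π ω) * (ν₀ ω - b₀ ω)) := by
  have h1a : MemLp (1 - a) ∞ μ := (memLp_top_const 1).sub ha
  have hmul {f g : Ω → ℝ} (hf : MemLp f ∞ μ) (hg : MemLp g ∞ μ) : MemLp (f * g) ∞ μ := hg.mul hf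
  rw [aipwScore_eq_sum hW hY]
  refine (condExp_finsetSum_mul (ζ := ![π * ν₁, π * ν₀, π, ν₀, 1]) _ ?_ ?_ ?_ ?_).trans
    (ae_of_all _ fun ω => by simp [Fin.sum_univ_five]; ring)
  all_goals simp only [Finset.mem_univ, forall_const, Fin.forall_fin_succ, Matrix.cons_val_zero,
    Matrix.cons_val_succ, IsEmpty.forall_iff, and_true]
  · refine ⟨?_, ?_, ?_, ?_, ?_⟩ <;> fun_prop
  · exact ⟨h1a.neg, ha.neg, (hmul h1a hb₁).add (hmul ha hb₀), ha,
      (hmul (hmul ha h1a) (hτ.sub (hb₁.sub hb₀))).sub (hmul ha hb₀)⟩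
  · have hWi := hWL.integrable le_top
    exact ⟨hWi.mul_of_top_left hY₁, hWi.mul_of_top_left hY₀, hWi, hY₀.integrable le_top,
      integrable_const 1⟩
  · exact ⟨hπν₁, hπν₀, hπ, hν₀, (condExp_const hm (1 : ℝ)).eventuallyEq⟩

end AIPW

theorem hasDerivAt_sq_mul_add_cube_mul_zero (A B : ℝ) :
    HasDerivAt (fun t : ℝ => t ^ 2 * A + t ^ 3 * B) 0 0 := by
  simpa using
    ((hasDerivAt_pow 2 (0 : ℝ)).mul_const A).fun_add ((hasDerivAt_pow 3 (0 : ℝ)).mul_const B)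

theorem condExp_aipwScore_comp {Ω 𝒳 : Type*} [MeasurableSpace Ω] [StandardBorelSpace Ω]
    [MeasurableSpace 𝒳] {P : Measure Ω} [IsFiniteMeasure P] {X : Ω → 𝒳} (hX : Measurable X)
    {W Y Y0 Y1 : Ω → ℝ} (hWm : Measurable W) (hWbin : ∀ ω, W ω = 0 ∨ W ω = 1)
    (hY0m : Measurable Y0) (hY1m : Measurable Y1) (hY0 : MemLp Y0 ∞ P) (hY1 : MemLp Y1 ∞ P)
    (hSUTVA : ∀ ω, Y ω = W ω * Y1 ω + (1 - W ω) * Y0 ω)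
    (hUnconf : CondIndepFun (sigmaAlg X) hX.comap_le W (fun ω => (Y0 ω, Y1 ω)) P)
    {e μ0 μ1 : 𝒳 → ℝ} (hprop : P[W|sigmaAlg X] =ᵐ[P] fun ω => e (X ω))
    (hμ0c : P[Y0|sigmaAlg X] =ᵐ[P] fun ω => μ0 (X ω))
    (hμ1c : P[Y1|sigmaAlg X] =ᵐ[P] fun ω => μ1 (X ω))
    (τ a b₀ b₁ : 𝒳 → ℝ) (hτm : Measurable τ) (ham : Measurable a) (hb₀m : Measurable b₀)
    (hb₁m : Measurable b₁) (hτ : MemLp (fun ω => τ (X ω)) ∞ P)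
    (ha : MemLp (fun ω => a (X ω)) ∞ P) (hb₀ : MemLp (fun ω => b₀ (X ω)) ∞ P)
    (hb₁ : MemLp (fun ω => b₁ (X ω)) ∞ P) :
    P[aipwScore W Y (fun ω => τ (X ω)) (fun ω => a (X ω)) (fun ω => b₀ (X ω))
        (fun ω => b₁ (X ω))|sigmaAlg X] =ᵐ[P] fun ω =>
      a (X ω) * (1 - a (X ω)) * (τ (X ω) - (b₁ (X ω) - b₀ (X ω)))
        - ((1 - a (X ω)) * e (X ω) * (μ1 (X ω) - b₁ (X ω))
          - a (X ω) * (1 - e (X ω)) * (μ0 (X ω) - b₀ (X ω))) := by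
  have sm {ψ : 𝒳 → ℝ} (hψ : Measurable ψ) : StronglyMeasurable[sigmaAlg X] (fun ω => ψ (X ω)) :=
    (hψ.comp (comap_measurable X)).stronglyMeasurable
  have hW : MemLp W ∞ P := memLp_top_of_bound hWm.aestronglyMeasurable 1
    (ae_of_all _ fun ω => by rcases hWbin ω with h | h <;> simp [h])
  obtain ⟨hWY0, hWY1⟩ :=
    condExp_mul_outcomes_of_condIndepFun hX.comap_le hWm hY0m hY1m hW hY0 hY1 hUnconf
  exact condExp_aipwScore hX.comap_le hWbin hSUTVA hW hY0 hY1 hprop hμ0c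
    (hWY0.trans (hprop.mul hμ0c)) (hWY1.trans (hprop.mul hμ1c))
    (sm hτm) (sm ham) (sm hb₀m) (sm hb₁m) hτ ha hb₀ hb₁

theorem stmt_9
    {Ω 𝒳 : Type*} [MeasurableSpace Ω] [StandardBorelSpace Ω] [MeasurableSpace 𝒳]
    (P : Measure Ω) [IsProbabilityMeasure P]
    (X : Ω → 𝒳) (hX : Measurable X)
    (W : Ω → ℝ) (hWm : Measurable W) (hWbin : ∀ ω, W ω = 0 ∨ W ω = 1)
    (Y0 Y1 : Ω → ℝ) (hY0m : Measurable Y0) (hY1m : Measurable Y1)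
    (CY : ℝ) (hYbdd : ∀ ω, |Y0 ω| ≤ CY ∧ |Y1 ω| ≤ CY)
    (Y : Ω → ℝ) (hSUTVA : ∀ ω, Y ω = W ω * Y1 ω + (1 - W ω) * Y0 ω)
    (hUnconf : CondIndepFun (sigmaAlg X) hX.comap_le W (fun ω => (Y0 ω, Y1 ω)) P)
    (e : 𝒳 → ℝ) (hem : Measurable e)
    (hprop : P[W|sigmaAlg X] =ᵐ[P] (fun ω => e (X ω)))
    (hoverlap : ∀ᵐ ω ∂P, 0 < e (X ω) ∧ e (X ω) < 1)
    (μ0 μ1 : 𝒳 → ℝ) (hμ0m : Measurable μ0) (hμ1m : Measurable μ1)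
    (Cμ : ℝ) (hμbdd : ∀ x, |μ0 x| ≤ Cμ ∧ |μ1 x| ≤ Cμ)
    (hμ0c : P[Y0|sigmaAlg X] =ᵐ[P] (fun ω => μ0 (X ω)))
    (hμ1c : P[Y1|sigmaAlg X] =ᵐ[P] (fun ω => μ1 (X ω)))
    (τt m0t m1t : 𝒳 → ℝ) (hτtm : Measurable τt) (hm0tm : Measurable m0t) (hm1tm : Measurable m1t)
    (Cτt : ℝ) (hτtb : ∀ x, |τt x| ≤ Cτt)
    (Cmt : ℝ) (hmtb : ∀ x, |m0t x| ≤ Cmt ∧ |m1t x| ≤ Cmt)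
    (et : 𝒳 → ℝ) (hetm : Measurable et)
    (hetov : ∀ᵐ ω ∂P, 0 < et (X ω) ∧ et (X ω) < 1) :
    (P[(fun ω => e (X ω) * (1 - e (X ω)) * τt (X ω) - e (X ω) * (1 - e (X ω)) * (m1t (X ω) - m0t (X ω)) - (W ω - e (X ω)) * (Y ω - W ω * m1t (X ω) - (1 - W ω) * m0t (X ω)))|sigmaAlg X]
      =ᵐ[P] (fun ω => e (X ω) * (1 - e (X ω)) * (τt (X ω) - (μ1 (X ω) - μ0 (X ω))))) ∧
    (P[(fun ω => et (X ω) * (1 - et (X ω)) * τt (X ω) - et (X ω) * (1 - et (X ω)) * (μ1 (X ω) - μ0 (X ω)) - (W ω - et (X ω)) * (Y ω - W ω * μ1 (X ω) - (1 - W ω) * μ0 (X ω)))|sigmaAlg X]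
      =ᵐ[P] (fun ω => et (X ω) * (1 - et (X ω)) * (τt (X ω) - (μ1 (X ω) - μ0 (X ω))))) ∧
    ((P[(fun ω => e (X ω) * (1 - e (X ω)) * τt (X ω) - e (X ω) * (1 - e (X ω)) * (m1t (X ω) - m0t (X ω)) - (W ω - e (X ω)) * (Y ω - W ω * m1t (X ω) - (1 - W ω) * m0t (X ω)))|sigmaAlg X] =ᵐ[P] 0 ∧
      P[(fun ω => et (X ω) * (1 - et (X ω)) * τt (X ω) - et (X ω) * (1 - et (X ω)) * (μ1 (X ω) - μ0 (X ω)) - (W ω - et (X ω)) * (Y ω - W ω * μ1 (X ω) - (1 - W ω) * μ0 (X ω)))|sigmaAlg X] =ᵐ[P] 0) ↔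
      (∀ᵐ ω ∂P, τt (X ω) = μ1 (X ω) - μ0 (X ω))) ∧
    (∀ he h0 h1 : 𝒳 → ℝ, Measurable he → Measurable h0 → Measurable h1 →
      (∃ C : ℝ, ∀ x, |he x| ≤ C) → (∃ C : ℝ, ∀ x, |h0 x| ≤ C) → (∃ C : ℝ, ∀ x, |h1 x| ≤ C) →
      (∀ t : ℝ,
        P[(fun ω => (e (X ω) + t * he (X ω)) * (1 - (e (X ω) + t * he (X ω))) * (μ1 (X ω) - μ0 (X ω)) - (e (X ω) + t * he (X ω)) * (1 - (e (X ω) + t * he (X ω))) * ((μ1 (X ω) + t * h1 (X ω)) - (μ0 (X ω) + t * h0 (X ω))) - (W ω - (e (X ω) + t * he (X ω))) * (Y ω - W ω * (μ1 (X ω) + t * h1 (X ω)) - (1 - W ω) * (μ0 (X ω) + t * h0 (X ω))))|sigmaAlg X]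
          =ᵐ[P] (fun ω => t ^ 2 * ((e (X ω) - 1) * he (X ω) * h1 (X ω) - e (X ω) * he (X ω) * h0 (X ω)) + t ^ 3 * (he (X ω) ^ 2 * (h1 (X ω) - h0 (X ω))))) ∧
      (∀ᵐ ω ∂P, HasDerivAt (fun t : ℝ => t ^ 2 * ((e (X ω) - 1) * he (X ω) * h1 (X ω) - e (X ω) * he (X ω) * h0 (X ω)) + t ^ 3 * (he (X ω) ^ 2 * (h1 (X ω) - h0 (X ω)))) 0 0)) := by
  have hbdd {ψ : 𝒳 → ℝ} (hψ : Measurable ψ) {C : ℝ} (h : ∀ᵐ ω ∂P, |ψ (X ω)| ≤ C) :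
      MemLp (fun ω => ψ (X ω)) ∞ P :=
    memLp_top_of_bound (hψ.comp hX).aestronglyMeasurable C h
  have hunit {a : 𝒳 → ℝ} (ha : Measurable a) (h : ∀ᵐ ω ∂P, 0 < a (X ω) ∧ a (X ω) < 1) :
      MemLp (fun ω => a (X ω)) ∞ P :=
    hbdd ha (by filter_upwards [h] with ω hω; exact abs_le.mpr ⟨by linarith [hω.1], hω.2.le⟩)
  have score := condExp_aipwScore_comp hX hWm hWbin hY0m hY1m
    (memLp_top_of_bound hY0m.aestronglyMeasurable CY (ae_of_all _ fun ω => (hYbdd ω).1))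
    (memLp_top_of_bound hY1m.aestronglyMeasurable CY (ae_of_all _ fun ω => (hYbdd ω).2))
    hSUTVA hUnconf hprop hμ0c hμ1c
  have heL := hunit hem hoverlap
  have hμ0L := hbdd hμ0m (ae_of_all _ fun ω => (hμbdd (X ω)).1)
  have hμ1L := hbdd hμ1m (ae_of_all _ fun ω => (hμbdd (X ω)).2)
  have hτtL := hbdd hτtm (ae_of_all _ fun ω => hτtb (X ω))
  have h_true_e : P[aipwScore W Y (fun ω => τt (X ω)) (fun ω => e (X ω)) (fun ω => m0t (X ω))
      (fun ω => m1t (X ω))|sigmaAlg X] =ᵐ[P]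
        fun ω => e (X ω) * (1 - e (X ω)) * (τt (X ω) - (μ1 (X ω) - μ0 (X ω))) :=
    (score τt e m0t m1t hτtm hem hm0tm hm1tm hτtL heL
      (hbdd hm0tm (ae_of_all _ fun ω => (hmtb (X ω)).1))
      (hbdd hm1tm (ae_of_all _ fun ω => (hmtb (X ω)).2))).trans (ae_of_all _ fun ω => by ring)
  have h_true_μ : P[aipwScore W Y (fun ω => τt (X ω)) (fun ω => et (X ω)) (fun ω => μ0 (X ω))
      (fun ω => μ1 (X ω))|sigmaAlg X] =ᵐ[P]
        fun ω => et (X ω) * (1 - et (X ω)) * (τt (X ω) - (μ1 (X ω) - μ0 (X ω))) :=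
    (score τt et μ0 μ1 hτtm hetm hμ0m hμ1m hτtL (hunit hetm hetov) hμ0L hμ1L).trans
      (ae_of_all _ fun ω => by ring)
  refine ⟨h_true_e, h_true_μ,
    ⟨fun ⟨_, h0⟩ => ?_, fun hτ => ⟨h_true_e.trans ?_, h_true_μ.trans ?_⟩⟩, ?_⟩
  · filter_upwards [h_true_μ.symm.trans h0, hetov] with ω h hω
    have hw : et (X ω) * (1 - et (X ω)) ≠ 0 := mul_ne_zero hω.1.ne' (by linarith [hω.2])
    exact sub_eq_zero.mp ((mul_eq_zero.mp h).resolve_left hw)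
  · filter_upwards [hτ] with ω h using by simp [h]
  · filter_upwards [hτ] with ω h using by simp [h]
  rintro he h0 h1 hhe hh0 hh1 ⟨Ce, hCe⟩ ⟨C0, hC0⟩ ⟨C1, hC1⟩
  refine ⟨fun t => ?_, ae_of_all _ fun ω => hasDerivAt_sq_mul_add_cube_mul_zero _ _⟩
  have hheL := (hbdd hhe (ae_of_all _ fun ω => hCe (X ω))).const_mul t
  have hh0L := (hbdd hh0 (ae_of_all _ fun ω => hC0 (X ω))).const_mul t
  have hh1L := (hbdd hh1 (ae_of_all _ fun ω => hC1 (X ω))).const_mul t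
  exact (score (fun x => μ1 x - μ0 x) (fun x => e x + t * he x) (fun x => μ0 x + t * h0 x)
    (fun x => μ1 x + t * h1 x) (hμ1m.sub hμ0m) (hem.add (hhe.const_mul t))
    (hμ0m.add (hh0.const_mul t)) (hμ1m.add (hh1.const_mul t))
    (hμ1L.sub hμ0L) (heL.add hheL) (hμ0L.add hh0L) (hμ1L.add hh1L)).trans
    (ae_of_all _ fun ω => by ring)
end
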